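/- arXiv:2105.01161 — 11 statements merged into one kernel-verified Lean document; each statement's English description precedes it below -/
import Mathlib

section
/- Let N be a positive integer, let X_1,…,X_N be {0,1}-valued random variables, and let p_1,…,p_N ∈ (0,1) be such that for every k ∈ [N], E[X_k | X_1,…,X_{k−1}] ≤ p_k almost surely. Set X = Σ_{i=1}^N X_i and μ = Σ_{k=1}^N p_k. Then for every Δ > 0, Pr[X ≥ μ + Δ] ≤ exp(−Δ² / (2μ + 2Δ)). -/
/-!
Chernoff's method. Since `X k ∈ {0, 1}`, `exp (t * X k) = 1 + (exp t - 1) * X k` is affine in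
`X k`, so its conditional expectation given the past is at most
`1 + (exp t - 1) * p k ≤ exp ((exp t - 1) * p k)`. Pulling the product of the earlier factors
out of the conditional expectation and inducting on the largest index gives
`E[exp (t * ∑ X)] ≤ exp ((exp t - 1) * ∑ p)`. Markov's inequality at `t = Δ / (∑ p + Δ)`
then leaves an elementary inequality for `exp t` on `[0, 1]`.
-/

open MeasureTheory ProbabilityTheory Real

theorem Real.exp_sub_one_mul_one_sub_le {t : ℝ} (ht₀ : 0 ≤ t) (ht₁ : t ≤ 1) :
    (exp t - 1) * (1 - t) ≤ t - t ^ 2 / 2 := by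
  have hcubic : exp t ≤ 1 + t + t ^ 2 / 2 + 2 / 9 * t ^ 3 := by
    have h := Real.exp_bound' ht₀ ht₁ (n := 3) (by norm_num)
    norm_num [Finset.sum_range_succ, Nat.factorial] at h
    linarith
  nlinarith [mul_le_mul_of_nonneg_right hcubic (sub_nonneg.mpr ht₁), pow_nonneg ht₀ 3,
    pow_nonneg ht₀ 4]

theorem Real.exp_mul_eq_one_add_mul_of_mem_zero_one {x : ℝ} (t : ℝ) (hx : x = 0 ∨ x = 1) :
    exp (t * x) = 1 + (exp t - 1) * x := by
  rcases hx with rfl | rfl <;> simp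

-- Not the optimal `t = log (1 + Δ / M)`, but the one for which the cubic Taylor bound on `exp t`
-- closes the computation.
theorem chernoff_exponent_le {M Δ : ℝ} (hM : 0 ≤ M) (hΔ : 0 < Δ) :
    -(Δ / (M + Δ)) * (M + Δ) + (exp (Δ / (M + Δ)) - 1) * M ≤ -Δ ^ 2 / (2 * M + 2 * Δ) := by
  set t := Δ / (M + Δ) with ht
  have hMΔ : 0 < M + Δ := by linarith
  have htε : t * (M + Δ) = Δ := div_mul_cancel₀ Δ hMΔ.ne'
  have hM_eq : M = (1 - t) * (M + Δ) := by linear_combination htε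
  have hrhs : -Δ ^ 2 / (2 * M + 2 * Δ) = -(t * Δ / 2) := by rw [ht]; field_simp
  have ht₁ : t ≤ 1 := (div_le_one hMΔ).mpr (by linarith)
  have htaylor := mul_le_mul_of_nonneg_right
    (Real.exp_sub_one_mul_one_sub_le (by positivity) ht₁) hMΔ.le
  clear_value t
  calc -t * (M + Δ) + (exp t - 1) * M = -Δ + (exp t - 1) * (1 - t) * (M + Δ) := by
        linear_combination -htε + (exp t - 1) * hM_eq
    _ ≤ -(t * Δ / 2) := by linear_combination htaylor + (1 - t / 2) * htε
    _ = -Δ ^ 2 / (2 * M + 2 * Δ) := hrhs.symm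

section
variable {Ω : Type*} {m m0 : MeasurableSpace Ω} {μ : Measure Ω}

theorem integral_mul_le_of_condExp_le (hm : m ≤ m0) [SigmaFinite (μ.trim hm)] {Y Z : Ω → ℝ}
    {a : ℝ} (hY : StronglyMeasurable[m] Y) (hY₀ : 0 ≤ᵐ[μ] Y) (hYi : Integrable Y μ)
    (hZi : Integrable Z μ) (hYZi : Integrable (Y * Z) μ) (hZa : μ[Z | m] ≤ᵐ[μ] fun _ => a) :
    ∫ ω, (Y * Z) ω ∂μ ≤ a * ∫ ω, Y ω ∂μ := by
  have hpull : μ[Y * Z | m] =ᵐ[μ] Y * μ[Z | m] :=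
    condExp_mul_of_stronglyMeasurable_left hY hYZi hZi
  calc ∫ ω, (Y * Z) ω ∂μ = ∫ ω, (Y * μ[Z | m]) ω ∂μ := by
        rw [← integral_condExp hm, integral_congr_ae hpull]
    _ ≤ ∫ ω, Y ω * a ∂μ := by
        refine integral_mono_ae (integrable_condExp.congr hpull) (hYi.mul_const a) ?_
        filter_upwards [hY₀, hZa] with ω hYω hZω
        exact mul_le_mul_of_nonneg_left hZω hYω
    _ = a * ∫ ω, Y ω ∂μ := by rw [integral_mul_const, mul_comm]

variable {ι : Type*}

theorem integral_prod_le_prod_of_condExp_le [LinearOrder ι] [IsProbabilityMeasure μ]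
    (F : ι → MeasurableSpace Ω) (hF : ∀ k, F k ≤ m0)
    {Y : ι → Ω → ℝ} {a : ι → ℝ} {C : ℝ} (hY : ∀ i, Measurable (Y i))
    (hY_past : ∀ i k, i < k → Measurable[F k] (Y i)) (hY₀ : ∀ i ω, 0 ≤ Y i ω)
    (hYC : ∀ i ω, Y i ω ≤ C) (ha : ∀ k, 0 ≤ a k) (hYa : ∀ k, μ[Y k | F k] ≤ᵐ[μ] fun _ => a k)
    (s : Finset ι) :
    ∫ ω, ∏ i ∈ s, Y i ω ∂μ ≤ ∏ i ∈ s, a i := by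
  classical
  have hint : ∀ s : Finset ι, Integrable (fun ω => ∏ i ∈ s, Y i ω) μ := fun s =>
    .of_bound (Finset.measurable_prod s fun i _ => hY i).aestronglyMeasurable (C ^ s.card)
      (.of_forall fun ω => by
        rw [Real.norm_eq_abs, abs_of_nonneg (Finset.prod_nonneg fun i _ => hY₀ i ω)]
        exact (Finset.prod_le_prod (fun i _ => hY₀ i ω) fun i _ => hYC i ω).trans_eq
          (Finset.prod_const C))
  induction s using Finset.induction_on_max with
  | empty => simp
  | insert k s hs ih =>
    have hk : k ∉ s := fun h => lt_irrefl k (hs k h)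
    have hprod : (fun ω => ∏ i ∈ insert k s, Y i ω) = (fun ω => ∏ i ∈ s, Y i ω) * Y k := by
      ext ω; simp [Finset.prod_insert hk, mul_comm]
    have hpast : StronglyMeasurable[F k] (fun ω => ∏ i ∈ s, Y i ω) :=
      (Finset.measurable_prod s fun i hi => hY_past i k (hs i hi)).stronglyMeasurable
    have hYk : Integrable (Y k) μ := by simpa using hint {k}
    calc ∫ ω, ∏ i ∈ insert k s, Y i ω ∂μ
        ≤ a k * ∫ ω, ∏ i ∈ s, Y i ω ∂μ := by
          rw [hprod]
          exact integral_mul_le_of_condExp_le (hF k) hpast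
            (.of_forall fun ω => Finset.prod_nonneg fun i _ => hY₀ i ω) (hint s) hYk
            (hprod ▸ hint _) (hYa k)
      _ ≤ a k * ∏ i ∈ s, a i := mul_le_mul_of_nonneg_left ih (ha k)
      _ = ∏ i ∈ insert k s, a i := (Finset.prod_insert hk).symm

theorem integrable_exp_mul_sum [IsFiniteMeasure μ] [Fintype ι] {X : ι → Ω → ℝ}
    (hX : ∀ k, Measurable (X k)) (hX₁ : ∀ k ω, X k ω ≤ 1) {t : ℝ} (ht : 0 ≤ t) :
    Integrable (fun ω => exp (t * ∑ i, X i ω)) μ := by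
  refine .of_bound (by fun_prop) (exp (t * Fintype.card ι)) (.of_forall fun ω => ?_)
  rw [Real.norm_of_nonneg (exp_pos _).le, exp_le_exp]
  refine mul_le_mul_of_nonneg_left ?_ ht
  simpa using Finset.sum_le_sum fun i (_ : i ∈ Finset.univ) => hX₁ i ω

theorem mgf_sum_le_of_condExp_le [Fintype ι] [LinearOrder ι] [IsProbabilityMeasure μ]
    {X : ι → Ω → ℝ} {p : ι → ℝ}
    (hX : ∀ k, Measurable (X k)) (hX01 : ∀ k ω, X k ω = 0 ∨ X k ω = 1)
    (hcond : ∀ k, ∀ᵐ ω ∂μ,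
      (μ[X k | ⨆ i : {i // i < k}, MeasurableSpace.comap (X i.1) Real.measurableSpace]) ω ≤ p k)
    {t : ℝ} (ht : 0 ≤ t) :
    mgf (fun ω => ∑ i, X i ω) μ t ≤ exp ((exp t - 1) * ∑ i, p i) := by
  set c := exp t - 1
  have hc : 0 ≤ c := sub_nonneg.mpr (one_le_exp ht)
  let F k : MeasurableSpace Ω :=
    ⨆ i : {i // i < k}, MeasurableSpace.comap (X i.1) Real.measurableSpace
  have hF k : F k ≤ m0 := iSup_le fun i => (hX i.1).comap_le
  have hX_past i k (hik : i < k) : Measurable[F k] (X i) :=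
    Measurable.of_comap_le (le_iSup (fun j : {j // j < k} =>
      MeasurableSpace.comap (X j.1) Real.measurableSpace) ⟨i, hik⟩)
  have hexp_affine k : (fun ω => exp (t * X k ω)) = (fun _ => (1 : ℝ)) + c • X k := by
    ext ω; simp [exp_mul_eq_one_add_mul_of_mem_zero_one t (hX01 k ω), c, mul_comm]
  have hXk_int k : Integrable (X k) μ :=
    .of_bound (hX k).aestronglyMeasurable 1 (.of_forall fun ω => by
      rcases hX01 k ω with h | h <;> simp [h])
  have hcondExp_exp k : μ[fun ω => exp (t * X k ω) | F k] ≤ᵐ[μ] fun _ => exp (c * p k) := by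
    have hlin : μ[fun ω => exp (t * X k ω) | F k] =ᵐ[μ] fun ω => 1 + c * μ[X k | F k] ω := by
      rw [hexp_affine k]
      filter_upwards [condExp_add (integrable_const 1) ((hXk_int k).smul c) (F k),
        condExp_smul c (X k) (F k)] with ω hadd hsmul
      simp [hadd, hsmul, condExp_const (hF k)]
    filter_upwards [hlin, hcond k] with ω hlinω hpω
    rw [hlinω]
    linarith [mul_le_mul_of_nonneg_left hpω hc, add_one_le_exp (c * p k)]
  calc mgf (fun ω => ∑ i, X i ω) μ t = ∫ ω, ∏ i, exp (t * X i ω) ∂μ := by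
        simp only [mgf, Finset.mul_sum, exp_sum]
    _ ≤ ∏ i, exp (c * p i) :=
        integral_prod_le_prod_of_condExp_le F hF (C := exp t) (fun i => by fun_prop)
          (fun i k hik => (hX_past i k hik).const_mul t |>.exp) (fun i ω => (exp_pos _).le)
          (fun i ω => by
            rcases hX01 i ω with h | h <;> simp [h, one_le_exp ht])
          (fun k => (exp_pos _).le) hcondExp_exp Finset.univ
    _ = exp (c * ∑ i, p i) := by rw [← exp_sum, Finset.mul_sum]

end

theorem azuma_style_submartingale_bound_general
    {Ω : Type*} [MeasurableSpace Ω] (μ : Measure Ω) [IsProbabilityMeasure μ]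
    (N : ℕ) (X : Fin N → Ω → ℝ)
    (hXmeas : ∀ k, Measurable (X k))
    (hX01 : ∀ k ω, X k ω = 0 ∨ X k ω = 1)
    (p : Fin N → ℝ) (hp : ∀ k, p k ∈ Set.Ioo (0 : ℝ) 1)
    (hcond : ∀ k : Fin N, ∀ᵐ ω ∂μ,
      (μ[X k | ⨆ i : {i : Fin N // i < k}, MeasurableSpace.comap (X i.1) Real.measurableSpace]) ω
        ≤ p k)
    (Δ : ℝ) (hΔ : 0 < Δ) :
    μ {ω | (∑ k, p k) + Δ ≤ ∑ i, X i ω} ≤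
      ENNReal.ofReal (Real.exp (-Δ ^ 2 / (2 * (∑ k, p k) + 2 * Δ))) := by
  set M := ∑ k, p k
  have hM : 0 ≤ M := Finset.sum_nonneg fun k _ => (hp k).1.le
  set t := Δ / (M + Δ)
  have ht : 0 ≤ t := div_nonneg hΔ.le (by linarith)
  have hX₁ k ω : X k ω ≤ 1 := by rcases hX01 k ω with h | h <;> simp [h]
  rw [← ofReal_measureReal]
  refine ENNReal.ofReal_le_ofReal ?_
  calc μ.real {ω | M + Δ ≤ ∑ i, X i ω}
      ≤ exp (-t * (M + Δ)) * mgf (fun ω => ∑ i, X i ω) μ t :=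
        measure_ge_le_exp_mul_mgf (M + Δ) ht (integrable_exp_mul_sum hXmeas hX₁ ht)
    _ ≤ exp (-t * (M + Δ)) * exp ((exp t - 1) * M) := by
        gcongr
        exact mgf_sum_le_of_condExp_le hXmeas hX01 hcond ht
    _ = exp (-t * (M + Δ) + (exp t - 1) * M) := (exp_add _ _).symm
    _ ≤ exp (-Δ ^ 2 / (2 * M + 2 * Δ)) := exp_le_exp.mpr (chernoff_exponent_le hM hΔ)

/-- Azuma–Hoeffding style inequality for sums of {0,1}-valued random variables with
conditionally bounded means (Lemma 2.6 of the paper). -/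
theorem azuma_style_submartingale_bound
    {Ω : Type*} [MeasurableSpace Ω] (μ : Measure Ω) [IsProbabilityMeasure μ]
    (N : ℕ) (hN : 0 < N) (X : Fin N → Ω → ℝ)
    (hXmeas : ∀ k, Measurable (X k))
    (hX01 : ∀ k ω, X k ω = 0 ∨ X k ω = 1)
    (p : Fin N → ℝ) (hp : ∀ k, p k ∈ Set.Ioo (0 : ℝ) 1)
    (hcond : ∀ k : Fin N, ∀ᵐ ω ∂μ,
      (μ[X k | ⨆ i : {i : Fin N // i < k}, MeasurableSpace.comap (X i.1) Real.measurableSpace]) ω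
        ≤ p k)
    (Δ : ℝ) (hΔ : 0 < Δ) :
    μ {ω | (∑ k, p k) + Δ ≤ ∑ i, X i ω} ≤
      ENNReal.ofReal (Real.exp (-Δ ^ 2 / (2 * (∑ k, p k) + 2 * Δ))) :=
  azuma_style_submartingale_bound_general μ N X hXmeas hX01 p hp hcond Δ hΔ
end

section
/- Let q,k ≥ 1, let F ⊆ {f : [q]^k → {0,1}} be finite, and let 0 ≤ β < γ ≤ 1 be such that K_γ^Y(F) ∩ K_β^N(F) = ∅. Then there exist a vector λ = (λ_{f,i,σ})_{f∈F,i∈[k],σ∈[q]} ∈ ℝ^{|F|·k·q} with all entries nonnegative and real numbers τ_Y > τ_N such that ⟨λ,μ⟩ ≥ τ_Y for every μ ∈ K_γ^Y(F) and ⟨λ,μ⟩ ≤ τ_N for every μ ∈ K_β^N(F). -/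
open scoped Classical

/-- A constraint function on `k` variables over the alphabet `[q]`. -/
abbrev CFun (q k : ℕ) := (Fin k → Fin q) → Bool

/-- `D` is a probability distribution on the finite type `Ω`. -/
def IsDist {Ω : Type*} [Fintype Ω] (D : Ω → ℝ) : Prop :=
  (∀ x, 0 ≤ D x) ∧ ∑ x, D x = 1

/-- The value `C(f,a)(b)` of the constraint `(f,a)` on the assignment
`b = (b_{i,σ})` to the `k × q` variables. -/
def cVal {q k : ℕ} (f : CFun q k) (a : Fin k → Fin q) (b : Fin k → Fin q → Fin q) : ℝ :=
  if f (fun i => b i (a i)) then 1 else 0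

/-- The planted assignment `𝕀` with `𝕀_{i,σ} = σ`. -/
def planted (q k : ℕ) : Fin k → Fin q → Fin q := fun _ σ => σ

/-- The set `S_γ^Y(F)` of YES distributions. -/
noncomputable def SY {q k : ℕ} (F : Finset (CFun q k)) (γ : ℝ) :
    Set ((↥F × (Fin k → Fin q)) → ℝ) :=
  {D | IsDist D ∧
    γ ≤ ∑ p : ↥F × (Fin k → Fin q), D p * cVal (p.1 : CFun q k) p.2 (planted q k)}

/-- The set `S_β^N(F)` of NO distributions. -/
noncomputable def SN {q k : ℕ} (F : Finset (CFun q k)) (β : ℝ) :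
    Set ((↥F × (Fin k → Fin q)) → ℝ) :=
  {D | IsDist D ∧ ∀ P : Fin q → Fin q → ℝ, (∀ σ, IsDist (P σ)) →
    (∑ p : ↥F × (Fin k → Fin q), D p *
      ∑ b : Fin k → Fin q → Fin q,
        (∏ i, ∏ σ, P σ (b i σ)) * cVal (p.1 : CFun q k) p.2 b) ≤ β}

/-- The marginal vector `μ(D) ∈ ℝ^{|F|·k·q}` of a distribution `D` on `F × [q]^k`. -/
noncomputable def marginal {q k : ℕ} (F : Finset (CFun q k))
    (D : ↥F × (Fin k → Fin q) → ℝ) : ↥F × Fin k × Fin q → ℝ :=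
  fun x => ∑ a : Fin k → Fin q, if a x.2.1 = x.2.2 then D (x.1, a) else 0

/-- The set `K_γ^Y(F)` of marginals of YES distributions. -/
noncomputable def KY {q k : ℕ} (F : Finset (CFun q k)) (γ : ℝ) :
    Set (↥F × Fin k × Fin q → ℝ) :=
  marginal F '' SY F γ

/-- The set `K_β^N(F)` of marginals of NO distributions. -/
noncomputable def KN {q k : ℕ} (F : Finset (CFun q k)) (β : ℝ) :
    Set (↥F × Fin k × Fin q → ℝ) :=
  marginal F '' SN F β

section aux

variable {Ω : Type*} [Fintype Ω]

lemma sum_combo (c : Ω → ℝ) (D1 D2 : Ω → ℝ) (a b : ℝ) :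
    ∑ p, (a • D1 + b • D2) p * c p
      = a * ∑ p, D1 p * c p + b * ∑ p, D2 p * c p := by
  simp [add_mul, mul_assoc, Finset.sum_add_distrib, Finset.mul_sum]

lemma isDist_combo {D1 D2 : Ω → ℝ} (h1 : IsDist D1) (h2 : IsDist D2)
    {a b : ℝ} (ha : 0 ≤ a) (hb : 0 ≤ b) (hab : a + b = 1) :
    IsDist (a • D1 + b • D2) := by
  refine ⟨fun x => add_nonneg (mul_nonneg ha (h1.1 x)) (mul_nonneg hb (h2.1 x)), ?_⟩
  simp [Finset.sum_add_distrib, ← Finset.mul_sum, h1.2, h2.2, hab]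

lemma isClosed_isDist : IsClosed {D : Ω → ℝ | IsDist D} := by
  have : {D : Ω → ℝ | IsDist D}
      = (⋂ x, {D : Ω → ℝ | 0 ≤ D x}) ∩ {D : Ω → ℝ | ∑ x, D x = 1} := by
    ext D; simp [IsDist, Set.mem_iInter]
  rw [this]
  exact (isClosed_iInter fun x => isClosed_le continuous_const (continuous_apply x)).inter
    (isClosed_eq (continuous_finset_sum _ fun x _ => continuous_apply x) continuous_const)

lemma isCompact_of_dist {s : Set (Ω → ℝ)}
    (hsub : s ⊆ {D | IsDist D}) (hclosed : IsClosed s) : IsCompact s := by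
  refine IsCompact.of_isClosed_subset
    (isCompact_univ_pi fun _ => (isCompact_Icc : IsCompact (Set.Icc (0:ℝ) 1))) hclosed ?_
  intro D hD x _
  obtain ⟨hn, hs⟩ := hsub hD
  refine ⟨hn x, ?_⟩
  calc D x ≤ ∑ y, D y := Finset.single_le_sum (fun i _ => hn i) (Finset.mem_univ x)
  _ = 1 := hs

lemma convex_ge (c : Ω → ℝ) (γ : ℝ) :
    Convex ℝ {D : Ω → ℝ | IsDist D ∧ γ ≤ ∑ p, D p * c p} := by
  rintro D1 ⟨h1d, h1⟩ D2 ⟨h2d, h2⟩ a b ha hb hab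
  refine ⟨isDist_combo h1d h2d ha hb hab, ?_⟩
  rw [sum_combo]
  calc γ = a * γ + b * γ := by rw [← add_mul, hab, one_mul]
  _ ≤ _ := add_le_add (mul_le_mul_of_nonneg_left h1 ha) (mul_le_mul_of_nonneg_left h2 hb)

lemma isCompact_ge (c : Ω → ℝ) (γ : ℝ) :
    IsCompact {D : Ω → ℝ | IsDist D ∧ γ ≤ ∑ p, D p * c p} := by
  refine isCompact_of_dist (fun D hD => hD.1) ?_
  have : {D : Ω → ℝ | IsDist D ∧ γ ≤ ∑ p, D p * c p}
      = {D : Ω → ℝ | IsDist D} ∩ {D | γ ≤ ∑ p, D p * c p} := rfl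
  rw [this]
  exact isClosed_isDist.inter (isClosed_le continuous_const
    (continuous_finset_sum _ fun p _ => (continuous_apply p).mul continuous_const))

variable {ι : Type*}

lemma convex_forall_le (hyp : ι → Prop) (c : ι → Ω → ℝ) (β : ℝ) :
    Convex ℝ {D : Ω → ℝ | IsDist D ∧ ∀ P, hyp P → ∑ p, D p * c P p ≤ β} := by
  rintro D1 ⟨h1d, h1⟩ D2 ⟨h2d, h2⟩ a b ha hb hab
  refine ⟨isDist_combo h1d h2d ha hb hab, fun P hP => ?_⟩
  rw [sum_combo]
  calc a * ∑ p, D1 p * c P p + b * ∑ p, D2 p * c P p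
      ≤ a * β + b * β :=
        add_le_add (mul_le_mul_of_nonneg_left (h1 P hP) ha)
          (mul_le_mul_of_nonneg_left (h2 P hP) hb)
  _ = β := by rw [← add_mul, hab, one_mul]

lemma isCompact_forall_le (hyp : ι → Prop) (c : ι → Ω → ℝ) (β : ℝ) :
    IsCompact {D : Ω → ℝ | IsDist D ∧ ∀ P, hyp P → ∑ p, D p * c P p ≤ β} := by
  refine isCompact_of_dist (fun D hD => hD.1) ?_
  have : {D : Ω → ℝ | IsDist D ∧ ∀ P, hyp P → ∑ p, D p * c P p ≤ β}
      = {D : Ω → ℝ | IsDist D} ∩ ⋂ P, {D | hyp P → ∑ p, D p * c P p ≤ β} := by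
    ext D; simp [Set.mem_iInter]
  rw [this]
  refine isClosed_isDist.inter (isClosed_iInter fun P => ?_)
  by_cases hP : hyp P
  · have : {D : Ω → ℝ | hyp P → ∑ p, D p * c P p ≤ β}
        = {D : Ω → ℝ | ∑ p, D p * c P p ≤ β} := by ext D; simp [hP]
    rw [this]
    exact isClosed_le
      (continuous_finset_sum _ fun p _ => (continuous_apply p).mul continuous_const)
      continuous_const
  · have : {D : Ω → ℝ | hyp P → ∑ p, D p * c P p ≤ β} = Set.univ := by
      ext D; simp [hP]
    rw [this]; exact isClosed_univ

end aux

section marg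

variable {q k : ℕ} (F : Finset (CFun q k))

lemma marginal_apply (D : ↥F × (Fin k → Fin q) → ℝ) (x) :
    marginal F D x = ∑ a, (if a x.2.1 = x.2.2 then (1:ℝ) else 0) * D (x.1, a) := by
  simp [marginal, ite_mul]

lemma marginal_continuous : Continuous (marginal F) := by
  refine continuous_pi fun x => ?_
  have : (fun D => marginal F D x)
      = fun D : ↥F × (Fin k → Fin q) → ℝ =>
        ∑ a, (if a x.2.1 = x.2.2 then (1:ℝ) else 0) * D (x.1, a) := by
    funext D; exact marginal_apply F D x
  rw [this]
  exact continuous_finset_sum _ fun a _ => continuous_const.mul (continuous_apply _)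

noncomputable def marginalL :
    ((↥F × (Fin k → Fin q)) → ℝ) →ₗ[ℝ] (↥F × Fin k × Fin q → ℝ) where
  toFun := marginal F
  map_add' D1 D2 := by
    funext x; simp [marginal_apply, mul_add, Finset.sum_add_distrib]
  map_smul' c D := by
    funext x; simp [marginal_apply, Finset.mul_sum, mul_left_comm]

lemma sum_marginal (D : ↥F × (Fin k → Fin q) → ℝ) :
    ∑ x, marginal F D x = k * ∑ p, D p := by
  rw [Fintype.sum_prod_type]
  have : ∀ f : ↥F, ∑ y : Fin k × Fin q, marginal F D (f, y) = k * ∑ a, D (f, a) := by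
    intro f
    rw [Fintype.sum_prod_type]
    have hi : ∀ i : Fin k, ∑ σ : Fin q, marginal F D (f, i, σ) = ∑ a, D (f, a) := by
      intro i
      simp only [marginal]
      rw [Finset.sum_comm]
      congr 1; funext a
      simp
    simp [hi, Finset.sum_const, mul_comm]
  simp [this, Finset.mul_sum, Fintype.sum_prod_type]

end marg

/-- If `K_γ^Y(F)` and `K_β^N(F)` are disjoint, there is a separating hyperplane with
nonnegative coefficients (Proposition 4.1 of the paper). -/
theorem separating_hyperplane_nonneg (q k : ℕ) (hq : 1 ≤ q) (hk : 1 ≤ k)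
    (F : Finset (CFun q k)) (γ β : ℝ) (hβ0 : 0 ≤ β) (hβγ : β < γ) (hγ1 : γ ≤ 1)
    (hdisj : KY F γ ∩ KN F β = ∅) :
    ∃ (lam : ↥F × Fin k × Fin q → ℝ) (τY τN : ℝ),
      (∀ x, 0 ≤ lam x) ∧ τN < τY ∧
      (∀ μ ∈ KY F γ, τY ≤ ∑ x, lam x * μ x) ∧
      (∀ μ ∈ KN F β, ∑ x, lam x * μ x ≤ τN) := by
  classical
  -- SY and SN are convex & compact
  have hSYconv : Convex ℝ (SY F γ) := convex_ge _ γ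
  have hSYcomp : IsCompact (SY F γ) := isCompact_ge _ γ
  have hSNconv : Convex ℝ (SN F β) :=
    convex_forall_le (fun P : Fin q → Fin q → ℝ => ∀ σ, IsDist (P σ)) _ β
  have hSNcomp : IsCompact (SN F β) :=
    isCompact_forall_le (fun P : Fin q → Fin q → ℝ => ∀ σ, IsDist (P σ)) _ β
  -- KY and KN
  have hKYconv : Convex ℝ (KY F γ) := hSYconv.linear_image (marginalL F)
  have hKNconv : Convex ℝ (KN F β) := hSNconv.linear_image (marginalL F)
  have hKYcomp : IsCompact (KY F γ) := hSYcomp.image (marginal_continuous F)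
  have hKNcomp : IsCompact (KN F β) := hSNcomp.image (marginal_continuous F)
  have hdisj' : Disjoint (KY F γ) (KN F β) := Set.disjoint_iff_inter_eq_empty.mpr hdisj
  obtain ⟨f, u, v, hu, huv, hv⟩ :=
    geometric_hahn_banach_compact_closed hKYconv hKYcomp hKNconv hKNcomp.isClosed hdisj'
  -- represent f by coefficients
  set w : ↥F × Fin k × Fin q → ℝ :=
    fun x => f (fun j => if x = j then (1:ℝ) else 0) with hw
  have hf : ∀ μ : ↥F × Fin k × Fin q → ℝ, f μ = ∑ x, μ x * w x := by
    intro μ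
    conv_lhs => rw [pi_eq_sum_univ μ]
    rw [map_sum]
    refine Finset.sum_congr rfl fun x _ => ?_
    rw [f.map_smul]
    rfl
  set c : ℝ := ∑ x, |w x| with hc
  have hcw : ∀ x, w x ≤ c := by
    intro x
    calc w x ≤ |w x| := le_abs_self _
    _ ≤ c := Finset.single_le_sum (fun i _ => abs_nonneg (w i)) (Finset.mem_univ x)
  -- every marginal vector in KY ∪ KN sums to k
  have hsum : ∀ {s : Set ((↥F × (Fin k → Fin q)) → ℝ)} {μ},
      μ ∈ marginal F '' s → s ⊆ {D | IsDist D} → ∑ x, μ x = k := by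
    rintro s μ ⟨D, hD, rfl⟩ hs
    rw [sum_marginal, (hs hD).2, mul_one]
  refine ⟨fun x => c - w x, c * k - u, c * k - v, fun x => sub_nonneg.mpr (hcw x),
    by linarith, ?_, ?_⟩
  · intro μ hμ
    have h1 : f μ < u := hu μ hμ
    have h2 : ∑ x, μ x = k := hsum hμ fun D hD => hD.1
    have : ∑ x, (c - w x) * μ x = c * k - f μ := by
      rw [hf]
      simp only [sub_mul]
      rw [Finset.sum_sub_distrib, ← Finset.mul_sum, h2]
      congr 1
      exact Finset.sum_congr rfl fun x _ => mul_comm _ _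
    rw [this]; linarith
  · intro μ hμ
    have h1 : v < f μ := hv μ hμ
    have h2 : ∑ x, μ x = k := hsum hμ fun D hD => hD.1
    have : ∑ x, (c - w x) * μ x = c * k - f μ := by
      rw [hf]
      simp only [sub_mul]
      rw [Finset.sum_sub_distrib, ← Finset.mul_sum, h2]
      congr 1
      exact Finset.sum_congr rfl fun x _ => mul_comm _ _
    rw [this]; linarith
end

section
/- For every finite family F ⊆ {f : [q]^k → {0,1}}, every instance Ψ of Max-CSP(F) on n variables, and every β ∈ [0,1]: if val_Ψ ≤ β, then for every assignment b ∈ [q]^n, D(Ψ^b) ∈ S_β^N(F). -/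
open scoped Classical

/-- An instance of `Max-CSP(F)` on `n` variables: `m ≥ 1` constraints, each applying a
function of `F` to a tuple of distinct variables, with positive weights. -/
structure Inst (q k n : ℕ) (F : Finset (CFun q k)) where
  m : ℕ
  hm : 0 < m
  cf : Fin m → CFun q k
  hcf : ∀ i, cf i ∈ F
  cj : Fin m → Fin k → Fin n
  hcj : ∀ i, Function.Injective (cj i)
  w : Fin m → ℝ
  hw : ∀ i, 0 < w i

namespace Inst

variable {q k n : ℕ} {F : Finset (CFun q k)}

/-- Total weight `W` of an instance. -/
noncomputable def W (Ψ : Inst q k n F) : ℝ := ∑ i, Ψ.w i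

/-- The value `val_Ψ(b)` of the assignment `b` on the instance `Ψ`. -/
noncomputable def valOn (Ψ : Inst q k n F) (b : Fin n → Fin q) : ℝ :=
  Ψ.W⁻¹ * ∑ i, Ψ.w i * (if Ψ.cf i (fun t => b (Ψ.cj i t)) then 1 else 0)

/-- The optimum value `val_Ψ` of the instance `Ψ`. -/
noncomputable def val (Ψ : Inst q k n F) : ℝ := ⨆ b : Fin n → Fin q, Ψ.valOn b

/-- The distribution `D(Ψ^b)` on `F × [q]^k`: sample a constraint with probability
proportional to its weight and output its function together with the restriction of `b`
to its variables. -/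
noncomputable def dist (Ψ : Inst q k n F) (b : Fin n → Fin q) :
    ↥F × (Fin k → Fin q) → ℝ :=
  fun p => Ψ.W⁻¹ *
    ∑ i, if Ψ.cf i = (p.1 : CFun q k) ∧ (fun t => b (Ψ.cj i t)) = p.2 then Ψ.w i else 0

end Inst

/-- The bias matrix `bias_λ(Ψ) ∈ ℝ^{n×q}`. -/
noncomputable def biasM {q k n : ℕ} {F : Finset (CFun q k)}
    (lam : ↥F × Fin k × Fin q → ℝ) (Ψ : Inst q k n F) : Fin n → Fin q → ℝ :=
  fun ℓ σ => Ψ.W⁻¹ *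
    ∑ i, ∑ t, if Ψ.cj i t = ℓ then lam (⟨Ψ.cf i, Ψ.hcf i⟩, t, σ) * Ψ.w i else 0

/-- The bias `B_λ(Ψ) = Σ_ℓ max_σ bias_λ(Ψ)_{ℓ,σ}`. -/
noncomputable def Blam {q k n : ℕ} {F : Finset (CFun q k)}
    (lam : ↥F × Fin k × Fin q → ℝ) (Ψ : Inst q k n F) : ℝ :=
  ∑ ℓ, ⨆ σ : Fin q, biasM lam Ψ ℓ σ


lemma pushfwd' {ι κ : Type} [Fintype ι] [DecidableEq ι] [Fintype κ] [DecidableEq κ] {q : ℕ} (p : ι → Prop)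
    [DecidablePred p] (e2 : κ ≃ {x // p x}) (Q : ι → Fin q → ℝ)
    (hQ : ∀ x, ∑ y, Q x y = 1) (g : (κ → Fin q) → ℝ) :
    ∑ c : ι → Fin q, (∏ x, Q x (c x)) * g (fun t => c (e2 t))
      = ∑ v : κ → Fin q, (∏ t, Q (e2 t) (v t)) * g v := by
  set E := Equiv.piEquivPiSubtypeProd p (fun _ => Fin q) with hE
  rw [← Equiv.sum_comp E.symm (fun c => (∏ x, Q x (c x)) * g (fun t => c (e2 t)))]
  rw [Fintype.sum_prod_type]
  have h1 : ∀ (u : {x // p x} → Fin q) (r : {x // ¬ p x} → Fin q) (x : {x // p x}),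
      E.symm (u, r) (x : ι) = u x := by
    intro u r x
    simp [hE, Equiv.piEquivPiSubtypeProd, x.2]
  have h2 : ∀ (u : {x // p x} → Fin q) (r : {x // ¬ p x} → Fin q) (x : {x // ¬ p x}),
      E.symm (u, r) (x : ι) = r x := by
    intro u r x
    simp [hE, Equiv.piEquivPiSubtypeProd, x.2]
  have key : ∀ (u : {x // p x} → Fin q) (r : {x // ¬ p x} → Fin q),
      (∏ x, Q x (E.symm (u, r) x)) * g (fun t => E.symm (u, r) (e2 t))
        = ((∏ x : {x // p x}, Q x (u x)) * g (fun t => u (e2 t)))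
          * ∏ x : {x // ¬ p x}, Q x (r x) := by
    intro u r
    have h3 : ∀ t, E.symm (u, r) (e2 t : ι) = u (e2 t) := fun t => h1 u r (e2 t)
    rw [← Fintype.prod_subtype_mul_prod_subtype p (fun x => Q x (E.symm (u, r) x))]
    simp only [h1 u r, h2 u r]
    ring
  simp only [key]
  have hone : ∑ r : {x // ¬ p x} → Fin q, ∏ x : {x // ¬ p x}, Q (x : ι) (r x) = 1 := by
    rw [← Fintype.prod_sum]
    exact Finset.prod_eq_one (fun x _ => hQ x)
  have lhs_eq : ∀ u : {x // p x} → Fin q,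
      ∑ r : {x // ¬ p x} → Fin q,
        ((∏ x : {x // p x}, Q x (u x)) * g (fun t => u (e2 t)))
          * ∏ x : {x // ¬ p x}, Q (x : ι) (r x)
        = (∏ x : {x // p x}, Q x (u x)) * g (fun t => u (e2 t)) := by
    intro u
    rw [← Finset.mul_sum, hone, mul_one]
  simp only [lhs_eq]
  set E3 : (κ → Fin q) ≃ ({x // p x} → Fin q) :=
    Equiv.arrowCongr e2 (Equiv.refl (Fin q)) with hE3
  rw [← Equiv.sum_comp E3 (fun u => (∏ x : {x // p x}, Q x (u x)) *
      g (fun t => u (e2 t)))]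
  refine Finset.sum_congr rfl (fun v _ => ?_)
  have hv : ∀ x : {x // p x}, E3 v x = v (e2.symm x) := by
    intro x; simp [hE3]
  have hsel : ∀ t : κ, E3 v (e2 t) = v t := by
    intro t; rw [hv, Equiv.symm_apply_apply]
  rw [funext hsel]
  congr 1
  rw [← Equiv.prod_comp e2 (fun x => Q (x : ι) (E3 v x))]
  refine Finset.prod_congr rfl (fun t _ => ?_)
  rw [hv, Equiv.symm_apply_apply]

lemma pushfwd {ι : Type} [Fintype ι] [DecidableEq ι] {k q : ℕ}
    (e : Fin k → ι) (he : Function.Injective e)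
    (Q : ι → Fin q → ℝ) (hQ : ∀ x, ∑ y, Q x y = 1)
    (g : (Fin k → Fin q) → ℝ) :
    ∑ c : ι → Fin q, (∏ x, Q x (c x)) * g (fun t => c (e t))
      = ∑ v : Fin k → Fin q, (∏ t, Q (e t) (v t)) * g v := by
  have h := pushfwd' (fun x => x ∈ Set.range e) (Equiv.ofInjective e he) Q hQ g
  simpa using h

/-- Lemma 4.6 of the paper: if `val_Ψ ≤ β` then `D(Ψ^b) ∈ S_β^N(F)` for every `b`. -/
theorem dist_mem_SN (q k n : ℕ) [NeZero q] [NeZero k] (F : Finset (CFun q k))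
    (Ψ : Inst q k n F) (β : ℝ) (hβ : β ∈ Set.Icc (0 : ℝ) 1) (h : Ψ.val ≤ β) :
    ∀ b : Fin n → Fin q, Ψ.dist b ∈ SN F β := by

  intro b
  have hW : 0 < Ψ.W := Finset.sum_pos (fun i _ => Ψ.hw i)
    (Finset.univ_nonempty_iff.2 (Fin.pos_iff_nonempty.1 Ψ.hm))
  have hcond : ∀ (i : Fin Ψ.m) (p : ↥F × (Fin k → Fin q)),
      (Ψ.cf i = (p.1 : CFun q k) ∧ (fun t => b (Ψ.cj i t)) = p.2) ↔
        ((⟨Ψ.cf i, Ψ.hcf i⟩, fun t => b (Ψ.cj i t)) : ↥F × (Fin k → Fin q)) = p := by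
    intro i p
    rw [Prod.ext_iff, Subtype.ext_iff]
  have hDsum : ∀ (i : Fin Ψ.m) (T : ↥F × (Fin k → Fin q) → ℝ),
      (∑ p : ↥F × (Fin k → Fin q),
        (if Ψ.cf i = (p.1 : CFun q k) ∧ (fun t => b (Ψ.cj i t)) = p.2 then Ψ.w i else 0)
          * T p)
        = Ψ.w i * T (⟨Ψ.cf i, Ψ.hcf i⟩, fun t => b (Ψ.cj i t)) := by
    intro i T
    simp only [hcond i, ite_mul, zero_mul]
    rw [Finset.sum_ite_eq]
    simp
  refine ⟨⟨?_, ?_⟩, ?_⟩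
  · intro p
    refine mul_nonneg (inv_nonneg.2 hW.le) (Finset.sum_nonneg fun i _ => ?_)
    split
    · exact (Ψ.hw i).le
    · exact le_rfl
  · have : ∑ p : ↥F × (Fin k → Fin q), Ψ.dist b p
        = Ψ.W⁻¹ * ∑ i, Ψ.w i * (1 : ℝ) := by
      simp only [Inst.dist, ← Finset.mul_sum]
      congr 1
      rw [Finset.sum_comm]
      refine Finset.sum_congr rfl fun i _ => ?_
      have := hDsum i (fun _ => (1 : ℝ))
      simpa using this
    rw [this]
    simp only [mul_one]
    exact inv_mul_cancel₀ hW.ne'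
  · intro P hP
    set π : (Fin n → Fin q) → ℝ := fun c => ∏ ℓ, P (b ℓ) (c ℓ) with hπ
    set M : Fin Ψ.m → ℝ := fun i => ∑ v : Fin k → Fin q,
      (∏ t, P (b (Ψ.cj i t)) (v t)) * (if Ψ.cf i v then (1 : ℝ) else 0) with hM
    set T : ↥F × (Fin k → Fin q) → ℝ := fun p => ∑ b' : Fin k → Fin q → Fin q,
      (∏ t, ∏ σ, P σ (b' t σ)) * cVal (p.1 : CFun q k) p.2 b' with hT
    have hπ0 : ∀ c, 0 ≤ π c := fun c =>
      Finset.prod_nonneg fun ℓ _ => (hP (b ℓ)).1 (c ℓ)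
    have hπ1 : ∑ c : Fin n → Fin q, π c = 1 := by
      rw [hπ, ← Fintype.prod_sum]
      exact Finset.prod_eq_one fun ℓ _ => (hP (b ℓ)).2
    have hval : ∀ c, Ψ.valOn c ≤ β := fun c =>
      le_trans (le_ciSup (Set.Finite.bddAbove (Set.finite_range Ψ.valOn)) c) h
    -- Step A: LHS = W⁻¹ * Σ_i w_i * T(p_i)
    have stepA : ∑ p : ↥F × (Fin k → Fin q), Ψ.dist b p * T p
        = Ψ.W⁻¹ * ∑ i, Ψ.w i * T (⟨Ψ.cf i, Ψ.hcf i⟩, fun t => b (Ψ.cj i t)) := by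
      simp only [Inst.dist]
      have : ∀ p, (Ψ.W⁻¹ * ∑ i, if Ψ.cf i = (p.1 : CFun q k) ∧
            (fun t => b (Ψ.cj i t)) = p.2 then Ψ.w i else 0) * T p
          = Ψ.W⁻¹ * ∑ i, (if Ψ.cf i = (p.1 : CFun q k) ∧
            (fun t => b (Ψ.cj i t)) = p.2 then Ψ.w i else 0) * T p := by
        intro p
        rw [mul_assoc, Finset.sum_mul]
      simp only [this, ← Finset.mul_sum]
      congr 1
      rw [Finset.sum_comm]
      exact Finset.sum_congr rfl fun i _ => hDsum i T
    -- Step B: T(p_i) = M i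
    have stepB : ∀ i, T (⟨Ψ.cf i, Ψ.hcf i⟩, fun t => b (Ψ.cj i t)) = M i := by
      intro i
      have hinj : Function.Injective (fun t : Fin k => ((t, b (Ψ.cj i t)) : Fin k × Fin q)) :=
        fun s t hst => congrArg Prod.fst hst
      have hp := pushfwd (fun t : Fin k => ((t, b (Ψ.cj i t)) : Fin k × Fin q)) hinj
        (fun x => P x.2) (fun x => (hP x.2).2)
        (fun v => if Ψ.cf i v then (1 : ℝ) else 0)
      dsimp only at hp
      simp only [hM, hT]
      rw [← hp]
      rw [← Equiv.sum_comp (Equiv.curry (Fin k) (Fin q) (Fin q))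
        (fun b' : Fin k → Fin q → Fin q => (∏ t, ∏ σ, P σ (b' t σ)) *
          cVal (Ψ.cf i) (fun t => b (Ψ.cj i t)) b')]
      refine Finset.sum_congr rfl fun c _ => ?_
      rw [Fintype.prod_prod_type]
      rfl
    -- Step C: Σ_c π c * valOn c = W⁻¹ * Σ_i w_i * M i
    have hMc : ∀ i, ∑ c : Fin n → Fin q,
        π c * (if Ψ.cf i (fun t => c (Ψ.cj i t)) then (1 : ℝ) else 0) = M i := by
      intro i
      have := pushfwd (Ψ.cj i) (Ψ.hcj i) (fun ℓ => P (b ℓ)) (fun ℓ => (hP (b ℓ)).2)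
        (fun v => if Ψ.cf i v then (1 : ℝ) else 0)
      simpa only [hπ, hM] using this
    have stepC : ∑ c : Fin n → Fin q, π c * Ψ.valOn c
        = Ψ.W⁻¹ * ∑ i, Ψ.w i * M i := by
      simp only [Inst.valOn]
      have h1 : ∀ c : Fin n → Fin q, π c * (Ψ.W⁻¹ *
          ∑ i, Ψ.w i * (if Ψ.cf i (fun t => c (Ψ.cj i t)) then (1 : ℝ) else 0))
          = Ψ.W⁻¹ * ∑ i, Ψ.w i *
            (π c * (if Ψ.cf i (fun t => c (Ψ.cj i t)) then (1 : ℝ) else 0)) := by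
        intro c
        rw [mul_left_comm]
        congr 1
        rw [Finset.mul_sum]
        exact Finset.sum_congr rfl fun i _ => by ring
      simp only [h1, ← Finset.mul_sum]
      congr 1
      rw [Finset.sum_comm]
      refine Finset.sum_congr rfl fun i _ => ?_
      rw [← Finset.mul_sum, hMc i]
    -- conclude
    rw [stepA]
    calc Ψ.W⁻¹ * ∑ i, Ψ.w i * T (⟨Ψ.cf i, Ψ.hcf i⟩, fun t => b (Ψ.cj i t))
        = Ψ.W⁻¹ * ∑ i, Ψ.w i * M i := by
          congr 1
          exact Finset.sum_congr rfl fun i _ => by rw [stepB i]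
      _ = ∑ c : Fin n → Fin q, π c * Ψ.valOn c := stepC.symm
      _ ≤ ∑ c : Fin n → Fin q, π c * β :=
          Finset.sum_le_sum fun c _ => mul_le_mul_of_nonneg_left (hval c) (hπ0 c)
      _ = β := by rw [← Finset.sum_mul, hπ1, one_mul]
end

section
/- Let q,k ≥ 1, let F ⊆ {f : [q]^k → {0,1}} be finite, let 0 ≤ β < γ ≤ 1, let λ ∈ ℝ^{|F|·k·q} have nonnegative entries, and let τ_Y > τ_N be reals such that ⟨λ,μ⟩ ≥ τ_Y for every μ ∈ K_γ^Y(F) and ⟨λ,μ⟩ ≤ τ_N for every μ ∈ K_β^N(F). Then for every instance Ψ of Max-CSP(F): if val_Ψ ≥ γ then B_λ(Ψ) ≥ τ_Y, and if val_Ψ ≤ β then B_λ(Ψ) ≤ τ_N. -/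
open scoped Classical

section Aux

lemma sum_prod_fun {ι α : Type*} [Fintype ι] [Fintype α] [DecidableEq ι] (μ : ι → α → ℝ) :
    ∑ g : ι → α, ∏ i, μ i (g i) = ∏ i, ∑ y, μ i y := by
  rw [Finset.prod_univ_sum]
  simp [Fintype.piFinset_univ]

lemma sum_marg {ι κ α : Type*} [Fintype ι] [Fintype κ] [Fintype α] [DecidableEq ι] [DecidableEq κ]
    (e : κ → ι) (he : Function.Injective e) (μ : ι → α → ℝ) (hμ : ∀ i, (∑ y, μ i y) = 1)
    (φ : (κ → α) → ℝ) :
    ∑ g : ι → α, (∏ i, μ i (g i)) * φ (fun j => g (e j))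
      = ∑ h : κ → α, (∏ j, μ (e j) (h j)) * φ h := by
  classical
  set s : Finset ι := Finset.univ.image e with hs
  have hmem : ∀ i, i ∈ s ↔ i ∈ Set.range e := by simp [hs, Set.mem_range]
  set Φ : ((κ → α) × ({i : ι // i ∉ Set.range e} → α)) → (ι → α) :=
    fun p i => if hi : i ∈ Set.range e then p.1 (Classical.choose hi) else p.2 ⟨i, hi⟩ with hΦ
  have key1 : ∀ p j, Φ p (e j) = p.1 j := by
    intro p j
    have hi : e j ∈ Set.range e := ⟨j, rfl⟩
    rw [hΦ]; simp only [dif_pos hi]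
    exact congrArg p.1 (he (Classical.choose_spec hi))
  have key2 : ∀ p i (h : i ∉ Set.range e), Φ p i = p.2 ⟨i, h⟩ := by
    intro p i h; rw [hΦ]; simp only [dif_neg h]
  have hbij : Function.Bijective Φ := by
    constructor
    · intro p p' hpp
      have h1 : p.1 = p'.1 := funext fun j => by rw [← key1 p j, ← key1 p' j, hpp]
      have h2 : p.2 = p'.2 := funext fun c => by rw [← key2 p c.1 c.2, ← key2 p' c.1 c.2, hpp]
      exact Prod.ext h1 h2
    · intro g
      refine ⟨(fun j => g (e j), fun c => g c.1), ?_⟩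
      funext i
      by_cases hi : i ∈ Set.range e
      · rw [hΦ]; simp only [dif_pos hi]
        rw [Classical.choose_spec hi]
      · rw [key2 _ i hi]
  rw [← Function.Bijective.sum_comp hbij]
  have hsplit : ∀ p, (∏ i, μ i (Φ p i))
      = (∏ j, μ (e j) (p.1 j)) * ∏ c : {i : ι // i ∉ Set.range e}, μ c.1 (p.2 c) := by
    intro p
    rw [← Finset.prod_mul_prod_compl s (fun i => μ i (Φ p i))]
    congr 1
    · rw [hs, Finset.prod_image (fun x _ y _ h => he h)]
      exact Finset.prod_congr rfl fun j _ => by rw [key1]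
    · rw [Finset.prod_subtype (p := fun i => i ∉ Set.range e) sᶜ
        (fun x => by simp [Finset.mem_compl, hmem]) (fun i => μ i (Φ p i))]
      exact Finset.prod_congr rfl fun c _ => by rw [key2 p c.1 c.2]
  calc ∑ p : ((κ → α) × ({i : ι // i ∉ Set.range e} → α)),
        (∏ i, μ i (Φ p i)) * φ (fun j => Φ p (e j))
      = ∑ p : ((κ → α) × ({i : ι // i ∉ Set.range e} → α)),
        ((∏ j, μ (e j) (p.1 j)) * φ p.1) * ∏ c, μ c.1 (p.2 c) := by
        refine Finset.sum_congr rfl fun p _ => ?_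
        rw [hsplit p]
        have : (fun j => Φ p (e j)) = p.1 := funext fun j => key1 p j
        rw [this]; ring
    _ = ∑ h : κ → α, ((∏ j, μ (e j) (h j)) * φ h) *
          ∑ r : {i : ι // i ∉ Set.range e} → α, ∏ c, μ c.1 (r c) := by
        rw [Fintype.sum_prod_type]
        exact Finset.sum_congr rfl fun h _ => by rw [Finset.mul_sum]
    _ = ∑ h : κ → α, (∏ j, μ (e j) (h j)) * φ h := by
        refine Finset.sum_congr rfl fun h _ => ?_
        have h1 : ∑ r : {i : ι // i ∉ Set.range e} → α, ∏ c, μ c.1 (r c) = 1 := by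
          rw [sum_prod_fun]; exact Finset.prod_eq_one fun c _ => hμ c.1
        rw [h1, mul_one]

variable {q k n : ℕ} {F : Finset (CFun q k)}

lemma W_pos (Ψ : Inst q k n F) : 0 < Ψ.W := by
  have : Nonempty (Fin Ψ.m) := ⟨⟨0, Ψ.hm⟩⟩
  exact Finset.sum_pos (fun i _ => Ψ.hw i) Finset.univ_nonempty

lemma sum_dist_mul (Ψ : Inst q k n F) (b : Fin n → Fin q) (G : ↥F × (Fin k → Fin q) → ℝ) :
    ∑ p : ↥F × (Fin k → Fin q), Ψ.dist b p * G p
      = Ψ.W⁻¹ * ∑ i, Ψ.w i * G (⟨Ψ.cf i, Ψ.hcf i⟩, fun t => b (Ψ.cj i t)) := by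
  have key : ∀ i : Fin Ψ.m, (∑ p : ↥F × (Fin k → Fin q),
      (if Ψ.cf i = (p.1 : CFun q k) ∧ (fun t => b (Ψ.cj i t)) = p.2 then Ψ.w i else 0) * G p)
      = Ψ.w i * G (⟨Ψ.cf i, Ψ.hcf i⟩, fun t => b (Ψ.cj i t)) := by
    intro i
    rw [Finset.sum_eq_single ((⟨⟨Ψ.cf i, Ψ.hcf i⟩, fun t => b (Ψ.cj i t)⟩ :
        ↥F × (Fin k → Fin q)))]
    · rw [if_pos ⟨rfl, rfl⟩]
    · intro p _ hp
      rw [if_neg, zero_mul]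
      rintro ⟨h1, h2⟩
      exact hp (Prod.ext (Subtype.ext h1.symm) h2.symm)
    · intro h; exact absurd (Finset.mem_univ _) h
  simp only [Inst.dist]
  have step : ∀ p : ↥F × (Fin k → Fin q),
      (Ψ.W⁻¹ * ∑ i, if Ψ.cf i = (p.1 : CFun q k) ∧ (fun t => b (Ψ.cj i t)) = p.2
          then Ψ.w i else 0) * G p
      = Ψ.W⁻¹ * ∑ i, (if Ψ.cf i = (p.1 : CFun q k) ∧ (fun t => b (Ψ.cj i t)) = p.2
          then Ψ.w i else 0) * G p := by
    intro p; rw [mul_assoc, Finset.sum_mul]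
  rw [Finset.sum_congr rfl fun p _ => step p, ← Finset.mul_sum, Finset.sum_comm]
  congr 1
  exact Finset.sum_congr rfl fun i _ => key i

lemma dist_isDist (Ψ : Inst q k n F) (b : Fin n → Fin q) : IsDist (Ψ.dist b) := by
  constructor
  · intro p
    refine mul_nonneg (inv_nonneg.2 (W_pos Ψ).le) (Finset.sum_nonneg fun i _ => ?_)
    split
    · exact (Ψ.hw i).le
    · exact le_refl 0
  · have h := sum_dist_mul Ψ b (fun _ => (1 : ℝ))
    simp only [mul_one] at h
    rw [h]
    exact inv_mul_cancel₀ (W_pos Ψ).ne'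

lemma dist_val (Ψ : Inst q k n F) (b : Fin n → Fin q) :
    ∑ p : ↥F × (Fin k → Fin q), Ψ.dist b p * cVal (p.1 : CFun q k) p.2 (planted q k)
      = Ψ.valOn b := by
  rw [sum_dist_mul]
  rfl

lemma inner_marginal (lam : ↥F × Fin k × Fin q → ℝ) (Ψ : Inst q k n F) (b : Fin n → Fin q) :
    ∑ x : ↥F × Fin k × Fin q, lam x * marginal F (Ψ.dist b) x
      = ∑ ℓ, biasM lam Ψ ℓ (b ℓ) := by
  classical
  have step1 : ∑ x : ↥F × Fin k × Fin q, lam x * marginal F (Ψ.dist b) x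
      = ∑ p : ↥F × (Fin k → Fin q), Ψ.dist b p * ∑ t, lam (p.1, t, p.2 t) := by
    unfold marginal
    have push : ∀ x : ↥F × Fin k × Fin q,
        lam x * (∑ a : Fin k → Fin q, if a x.2.1 = x.2.2 then Ψ.dist b (x.1, a) else 0)
        = ∑ a : Fin k → Fin q, if a x.2.1 = x.2.2 then lam x * Ψ.dist b (x.1, a) else 0 := by
      intro x
      rw [Finset.mul_sum]
      exact Finset.sum_congr rfl fun a _ => by rw [mul_ite, mul_zero]
    rw [Finset.sum_congr rfl fun x _ => push x]
    rw [Fintype.sum_prod_type, Fintype.sum_prod_type]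
    refine Finset.sum_congr rfl fun f _ => ?_
    rw [Fintype.sum_prod_type]
    rw [Finset.sum_congr rfl (fun t (_ : t ∈ Finset.univ) =>
      Finset.sum_comm (s := Finset.univ) (t := Finset.univ)
        (f := fun σ (a : Fin k → Fin q) =>
          if a t = σ then lam (f, t, σ) * Ψ.dist b (f, a) else 0))]
    rw [Finset.sum_comm]
    refine Finset.sum_congr rfl fun a _ => ?_
    rw [Finset.mul_sum]
    refine Finset.sum_congr rfl fun t _ => ?_
    rw [Finset.sum_ite_eq Finset.univ (a t) (fun σ => lam (f, t, σ) * Ψ.dist b (f, a)),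
      if_pos (Finset.mem_univ _)]
    ring
  rw [step1, sum_dist_mul]
  unfold biasM
  rw [← Finset.mul_sum]
  congr 1
  rw [Finset.sum_comm]
  refine Finset.sum_congr rfl fun i _ => ?_
  rw [Finset.sum_comm, Finset.mul_sum]
  refine Finset.sum_congr rfl fun t _ => ?_
  rw [Finset.sum_ite_eq Finset.univ (Ψ.cj i t)
    (fun ℓ => lam (⟨Ψ.cf i, Ψ.hcf i⟩, t, b ℓ) * Ψ.w i), if_pos (Finset.mem_univ _)]
  ring

lemma inner_eq (f : CFun q k) (a : Fin k → Fin q) (P : Fin q → Fin q → ℝ)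
    (hP : ∀ σ, IsDist (P σ)) :
    ∑ b' : Fin k → Fin q → Fin q, (∏ i, ∏ σ, P σ (b' i σ)) * cVal f a b'
      = ∑ c : Fin k → Fin q, (∏ t, P (a t) (c t)) * (if f c then (1:ℝ) else 0) := by
  classical
  have hbij : Function.Bijective
      (fun (g : Fin k × Fin q → Fin q) => (fun t σ => g (t, σ) : Fin k → Fin q → Fin q)) :=
    (Equiv.curry (Fin k) (Fin q) (Fin q)).bijective
  rw [← Function.Bijective.sum_comp hbij
    (fun b' => (∏ i, ∏ σ, P σ (b' i σ)) * cVal f a b')]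
  have he : Function.Injective (fun t : Fin k => ((t, a t) : Fin k × Fin q)) :=
    fun x y h => congrArg Prod.fst h
  have := sum_marg (e := fun t : Fin k => ((t, a t) : Fin k × Fin q)) he
    (μ := fun z y => P z.2 y) (hμ := fun z => (hP z.2).2)
    (φ := fun c => if f c then (1:ℝ) else 0)
  calc ∑ g : Fin k × Fin q → Fin q, (∏ i, ∏ σ, P σ (g (i, σ))) * cVal f a (fun t σ => g (t, σ))
      = ∑ g : Fin k × Fin q → Fin q, (∏ z : Fin k × Fin q, P z.2 (g z)) *
          ((fun c => if f c then (1:ℝ) else 0) (fun t => g (t, a t))) := by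
        refine Finset.sum_congr rfl fun g _ => ?_
        rw [← Fintype.prod_prod_type (f := fun z : Fin k × Fin q => P z.2 (g z))]
        rfl
    _ = ∑ c : Fin k → Fin q, (∏ t, P (a t) (c t)) * (if f c then (1:ℝ) else 0) := this

lemma val_inner_eq (Ψ : Inst q k n F) (b : Fin n → Fin q) (P : Fin q → Fin q → ℝ)
    (hP : ∀ σ, IsDist (P σ)) (i : Fin Ψ.m) :
    ∑ x : Fin n → Fin q, (∏ ℓ, P (b ℓ) (x ℓ)) * (if Ψ.cf i (fun t => x (Ψ.cj i t))
        then (1:ℝ) else 0)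
      = ∑ c : Fin k → Fin q, (∏ t, P (b (Ψ.cj i t)) (c t)) *
          (if Ψ.cf i c then (1:ℝ) else 0) := by
  classical
  exact sum_marg (e := Ψ.cj i) (Ψ.hcj i) (μ := fun ℓ y => P (b ℓ) y)
    (hμ := fun ℓ => (hP (b ℓ)).2) (φ := fun c => if Ψ.cf i c then (1:ℝ) else 0)

lemma no_cond (Ψ : Inst q k n F) (b : Fin n → Fin q) (P : Fin q → Fin q → ℝ)
    (hP : ∀ σ, IsDist (P σ)) :
    ∑ p : ↥F × (Fin k → Fin q), Ψ.dist b p *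
        ∑ b' : Fin k → Fin q → Fin q,
          (∏ i, ∏ σ, P σ (b' i σ)) * cVal (p.1 : CFun q k) p.2 b'
      = ∑ x : Fin n → Fin q, (∏ ℓ, P (b ℓ) (x ℓ)) * Ψ.valOn x := by
  classical
  rw [sum_dist_mul]
  have key : ∀ i : Fin Ψ.m,
      (∑ b' : Fin k → Fin q → Fin q, (∏ t, ∏ σ, P σ (b' t σ)) *
        cVal (Ψ.cf i) (fun t => b (Ψ.cj i t)) b')
      = ∑ x : Fin n → Fin q, (∏ ℓ, P (b ℓ) (x ℓ)) *
          (if Ψ.cf i (fun t => x (Ψ.cj i t)) then (1:ℝ) else 0) := by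
    intro i
    rw [inner_eq (Ψ.cf i) (fun t => b (Ψ.cj i t)) P hP, val_inner_eq Ψ b P hP i]
  rw [Finset.sum_congr rfl fun i _ => by rw [key i]]
  unfold Inst.valOn
  have exp : ∀ x : Fin n → Fin q, (∏ ℓ, P (b ℓ) (x ℓ)) *
      (Ψ.W⁻¹ * ∑ i, Ψ.w i * (if Ψ.cf i (fun t => x (Ψ.cj i t)) then (1:ℝ) else 0))
      = Ψ.W⁻¹ * ∑ i, Ψ.w i * ((∏ ℓ, P (b ℓ) (x ℓ)) *
          (if Ψ.cf i (fun t => x (Ψ.cj i t)) then (1:ℝ) else 0)) := by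
    intro x
    rw [Finset.mul_sum, Finset.mul_sum, Finset.mul_sum]
    rw [← Finset.sum_congr rfl fun i (_ : i ∈ Finset.univ) => rfl]
    ring_nf
  rw [Finset.sum_congr rfl fun x _ => exp x, ← Finset.mul_sum]
  congr 1
  rw [Finset.sum_comm]
  refine Finset.sum_congr rfl fun i _ => ?_
  rw [Finset.mul_sum]

end Aux


/-- Lemma 4.3 of the paper: if `λ` separates `K_γ^Y(F)` from `K_β^N(F)` with thresholds
`τ_Y > τ_N`, then the bias `B_λ(Ψ)` distinguishes instances of value at least `γ` from
instances of value at most `β`. -/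
theorem bias_distinguishes (q k n : ℕ) [NeZero q] [NeZero k] (F : Finset (CFun q k))
    (γ β : ℝ) (hβ0 : 0 ≤ β) (hβγ : β < γ) (hγ1 : γ ≤ 1)
    (lam : ↥F × Fin k × Fin q → ℝ) (hlam : ∀ x, 0 ≤ lam x)
    (τY τN : ℝ) (hτ : τN < τY)
    (hY : ∀ μ ∈ KY F γ, τY ≤ ∑ x, lam x * μ x)
    (hN : ∀ μ ∈ KN F β, ∑ x, lam x * μ x ≤ τN)
    (Ψ : Inst q k n F) :
    (γ ≤ Ψ.val → τY ≤ Blam lam Ψ) ∧ (Ψ.val ≤ β → Blam lam Ψ ≤ τN) := by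
  classical
  have hq : 0 < q := Nat.pos_of_ne_zero (NeZero.ne q)
  haveI : Nonempty (Fin q) := ⟨⟨0, hq⟩⟩
  have hbdd : ∀ ℓ : Fin n, BddAbove (Set.range fun σ : Fin q => biasM lam Ψ ℓ σ) :=
    fun ℓ => Set.Finite.bddAbove (Set.finite_range _)
  have hvbdd : BddAbove (Set.range Ψ.valOn) := Set.Finite.bddAbove (Set.finite_range _)
  have hsum_le : ∀ b : Fin n → Fin q, ∑ ℓ, biasM lam Ψ ℓ (b ℓ) ≤ Blam lam Ψ :=
    fun b => Finset.sum_le_sum fun ℓ _ => le_ciSup (hbdd ℓ) (b ℓ)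
  constructor
  · intro hval
    obtain ⟨b0, hb0⟩ := Finite.exists_max Ψ.valOn
    have hv0 : Ψ.val = Ψ.valOn b0 := le_antisymm (ciSup_le hb0) (le_ciSup hvbdd b0)
    have hmem : marginal F (Ψ.dist b0) ∈ KY F γ := by
      refine ⟨Ψ.dist b0, ⟨dist_isDist Ψ b0, ?_⟩, rfl⟩
      rw [dist_val]
      exact le_trans hval (le_of_eq hv0)
    calc τY ≤ ∑ x, lam x * marginal F (Ψ.dist b0) x := hY _ hmem
      _ = ∑ ℓ, biasM lam Ψ ℓ (b0 ℓ) := inner_marginal lam Ψ b0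
      _ ≤ Blam lam Ψ := hsum_le b0
  · intro hval
    have hmax : ∀ ℓ : Fin n, ∃ σ : Fin q, ∀ σ', biasM lam Ψ ℓ σ' ≤ biasM lam Ψ ℓ σ :=
      fun ℓ => Finite.exists_max _
    choose bs hbs using hmax
    have hB : Blam lam Ψ = ∑ ℓ, biasM lam Ψ ℓ (bs ℓ) := by
      unfold Blam
      exact Finset.sum_congr rfl fun ℓ _ =>
        le_antisymm (ciSup_le (hbs ℓ)) (le_ciSup (hbdd ℓ) (bs ℓ))
    have hmem : marginal F (Ψ.dist bs) ∈ KN F β := by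
      refine ⟨Ψ.dist bs, ⟨dist_isDist Ψ bs, ?_⟩, rfl⟩
      intro P hP
      rw [no_cond Ψ bs P hP]
      calc ∑ x : Fin n → Fin q, (∏ ℓ, P (bs ℓ) (x ℓ)) * Ψ.valOn x
          ≤ ∑ x : Fin n → Fin q, (∏ ℓ, P (bs ℓ) (x ℓ)) * β := by
            refine Finset.sum_le_sum fun x _ => ?_
            exact mul_le_mul_of_nonneg_left ((le_ciSup hvbdd x).trans hval)
              (Finset.prod_nonneg fun ℓ _ => (hP (bs ℓ)).1 (x ℓ))
        _ = β := by
            rw [← Finset.sum_mul, sum_prod_fun (μ := fun ℓ y => P (bs ℓ) y),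
              Finset.prod_eq_one fun ℓ _ => (hP (bs ℓ)).2, one_mul]
    rw [hB]
    calc ∑ ℓ, biasM lam Ψ ℓ (bs ℓ)
        = ∑ x, lam x * marginal F (Ψ.dist bs) x := (inner_marginal lam Ψ bs).symm
      _ ≤ τN := hN _ hmem
end

section
/- For all integers q,k ≥ 1 and every finite nonempty family F ⊆ {f : [q]^k → {0,1}}, ρ_min(F) = ρ(F). -/
open scoped Classical

/-- `ρ(F) = min_{D_F ∈ Δ(F)} max_{D ∈ Δ([q])} E_{f∼D_F, a∼D^k}[f(a)]`. -/
noncomputable def rho {q k : ℕ} (F : Finset (CFun q k)) : ℝ :=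
  sInf {r | ∃ DF : ↥F → ℝ, IsDist DF ∧
    r = sSup {s | ∃ D : Fin q → ℝ, IsDist D ∧
      s = ∑ f : ↥F, ∑ a : Fin k → Fin q,
        DF f * (∏ i, D (a i)) * (if (f : CFun q k) a then 1 else 0)}}

/-- `ρ_min(F)`, the infimum of `val_Ψ` over all instances of `Max-CSP(F)`. -/
noncomputable def rhoMin {q k : ℕ} (F : Finset (CFun q k)) : ℝ :=
  sInf {r | ∃ (n : ℕ) (Ψ : Inst q k n F), r = Ψ.val}


/-! ### Auxiliary lemmas -/

section Aux

lemma sum_dist_pow {τ : Type*} [DecidableEq τ] [Fintype τ] {q : ℕ} (D : Fin q → ℝ)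
    (hD : ∑ σ, D σ = 1) :
    ∑ c : τ → Fin q, ∏ x : τ, D (c x) = 1 := by
  classical
  rw [← Fintype.piFinset_univ, ← Finset.prod_univ_sum]
  simp [hD]

lemma sum_prod_comp {n k q : ℕ} (D : Fin q → ℝ) (hD : ∑ σ, D σ = 1)
    (j : Fin k → Fin n) (hj : Function.Injective j) (G : (Fin k → Fin q) → ℝ) :
    ∑ b : Fin n → Fin q, (∏ ℓ, D (b ℓ)) * G (fun t => b (j t))
      = ∑ a : Fin k → Fin q, (∏ t, D (a t)) * G a := by
  classical
  set C := {ℓ : Fin n // ℓ ∉ Set.range j} with hC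
  let e : Fin k ⊕ C ≃ Fin n :=
    (Equiv.sumCongr (Equiv.ofInjective j hj) (Equiv.refl C)).trans
      (Equiv.sumCompl (· ∈ Set.range j))
  have hjt : ∀ t, e.symm (j t) = Sum.inl t := by
    intro t
    rw [Equiv.symm_apply_eq]
    rfl
  have key : ∀ (a : Fin k → Fin q) (c : C → Fin q),
      ((fun t => (Sum.elim a c ∘ e.symm) (j t)) = a) ∧
      (∏ ℓ, D ((Sum.elim a c ∘ e.symm) ℓ)
        = (∏ t, D (a t)) * ∏ x : C, D (c x)) := by
    intro a c
    constructor
    · funext t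
      simp [Function.comp, hjt t]
    · rw [← Equiv.prod_comp e (fun ℓ => D ((Sum.elim a c ∘ e.symm) ℓ))]
      simp only [Function.comp, Equiv.symm_apply_apply]
      rw [Fintype.prod_sum_type]
      simp
  have hE : ∑ b : Fin n → Fin q, (∏ ℓ, D (b ℓ)) * G (fun t => b (j t))
      = ∑ p : (Fin k → Fin q) × (C → Fin q),
          (∏ ℓ, D ((Sum.elim p.1 p.2 ∘ e.symm) ℓ))
            * G (fun t => (Sum.elim p.1 p.2 ∘ e.symm) (j t)) := by
    let E : ((Fin k → Fin q) × (C → Fin q)) ≃ (Fin n → Fin q) :=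
      { toFun := fun p => Sum.elim p.1 p.2 ∘ e.symm
        invFun := fun b => (fun t => b (e (Sum.inl t)), fun x => b (e (Sum.inr x)))
        left_inv := by
          intro p
          ext x
          · simp
          · simp
        right_inv := by
          intro b
          funext ℓ
          have : ∀ s : Fin k ⊕ C,
              Sum.elim (fun t => b (e (Sum.inl t))) (fun x => b (e (Sum.inr x))) s
                = b (e s) := by
            rintro (t | x) <;> rfl
          simp only [Function.comp, this, Equiv.apply_symm_apply] }
    rw [← Equiv.sum_comp E (fun b => (∏ ℓ, D (b ℓ)) * G (fun t => b (j t)))]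
    rfl
  rw [hE, Fintype.sum_prod_type]
  refine Finset.sum_congr rfl fun a _ => ?_
  have h1 := sum_dist_pow (τ := C) D hD
  conv_rhs => rw [← mul_one (∏ t, D (a t)), ← h1]
  conv_rhs => rw [Finset.mul_sum, Finset.sum_mul]
  exact Finset.sum_congr rfl fun c _ =>
    congrArg₂ HMul.hMul (key a c).2 (congrArg G (key a c).1)

lemma sum_comp_count {n k q : ℕ} (b : Fin n → Fin q) (G : (Fin k → Fin q) → ℝ) :
    ∑ j : Fin k → Fin n, G (fun t => b (j t))
      = ∑ a : Fin k → Fin q,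
          (∏ i, ((Finset.univ.filter fun ℓ => b ℓ = a i).card : ℝ)) * G a := by
  classical
  rw [← Finset.sum_fiberwise Finset.univ (fun j : Fin k → Fin n => (fun t => b (j t)))
        (fun j => G (fun t => b (j t)))]
  refine Finset.sum_congr rfl fun a _ => ?_
  have hcard : (Finset.univ.filter fun j : Fin k → Fin n => (fun t => b (j t)) = a)
      = Fintype.piFinset (fun i => Finset.univ.filter fun ℓ => b ℓ = a i) := by
    ext j
    simp [funext_iff]
  calc ∑ j ∈ Finset.univ.filter fun j : Fin k → Fin n => (fun t => b (j t)) = a,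
          G (fun t => b (j t))
      = ∑ j ∈ Finset.univ.filter fun j : Fin k → Fin n => (fun t => b (j t)) = a, G a := by
        refine Finset.sum_congr rfl fun j hj => ?_
        rw [Finset.mem_filter] at hj
        rw [hj.2]
    _ = ((Finset.univ.filter fun j : Fin k → Fin n => (fun t => b (j t)) = a).card : ℝ)
          * G a := by
        rw [Finset.sum_const, nsmul_eq_mul]
    _ = (∏ i, ((Finset.univ.filter fun ℓ => b ℓ = a i).card : ℝ)) * G a := by
        rw [hcard, Fintype.card_piFinset]
        push_cast
        ring

lemma count_sum {n q : ℕ} (b : Fin n → Fin q) :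
    ∑ σ : Fin q, ((Finset.univ.filter fun ℓ => b ℓ = σ).card : ℝ) = n := by
  classical
  have := Finset.card_eq_sum_card_fiberwise
    (f := b) (s := (Finset.univ : Finset (Fin n))) (t := Finset.univ)
    (fun x _ => Finset.mem_univ _)
  rw [Finset.card_univ, Fintype.card_fin] at this
  rw [← Nat.cast_sum, ← this]

end Aux

/-! ### The function `gval` -/

section Gval

variable {q k : ℕ} (F : Finset (CFun q k))

/-- The expected value of a random constraint under i.i.d. assignment. -/
noncomputable def feval (DF : ↥F → ℝ) (D : Fin q → ℝ) : ℝ :=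
  ∑ f : ↥F, ∑ a : Fin k → Fin q,
    DF f * (∏ i, D (a i)) * (if (f : CFun q k) a then 1 else 0)

/-- `sup_D E[f(a)]` for a fixed distribution on `F`. -/
noncomputable def gval (DF : ↥F → ℝ) : ℝ :=
  sSup {s | ∃ D : Fin q → ℝ, IsDist D ∧ s = feval F DF D}

lemma rho_eq_inf_gval : rho F = sInf {r | ∃ DF : ↥F → ℝ, IsDist DF ∧ r = gval F DF} := rfl

variable {F}

lemma feval_nonneg {DF : ↥F → ℝ} {D : Fin q → ℝ} (hDF : ∀ f, 0 ≤ DF f)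
    (hD : ∀ σ, 0 ≤ D σ) : 0 ≤ feval F DF D := by
  refine Finset.sum_nonneg fun f _ => Finset.sum_nonneg fun a _ => ?_
  have : (0:ℝ) ≤ if (f : CFun q k) a then 1 else 0 := by positivity
  exact mul_nonneg (mul_nonneg (hDF f) (Finset.prod_nonneg fun i _ => hD (a i))) this

lemma feval_le_one {DF : ↥F → ℝ} {D : Fin q → ℝ} (hDF : IsDist DF) (hD : IsDist D) :
    feval F DF D ≤ 1 := by
  have h1 : feval F DF D ≤ ∑ f : ↥F, ∑ a : Fin k → Fin q, DF f * (∏ i, D (a i)) := by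
    refine Finset.sum_le_sum fun f _ => Finset.sum_le_sum fun a _ => ?_
    have h2 : (0:ℝ) ≤ DF f * (∏ i, D (a i)) :=
      mul_nonneg (hDF.1 f) (Finset.prod_nonneg fun i _ => hD.1 (a i))
    split_ifs
    · rw [mul_one]
    · rw [mul_zero]; exact h2
  refine h1.trans ?_
  have h3 : ∀ f : ↥F, ∑ a : Fin k → Fin q, DF f * (∏ i, D (a i)) = DF f := by
    intro f
    rw [← Finset.mul_sum, sum_dist_pow D hD.2, mul_one]
  calc ∑ f : ↥F, ∑ a : Fin k → Fin q, DF f * (∏ i, D (a i))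
      = ∑ f : ↥F, DF f := Finset.sum_congr rfl fun f _ => h3 f
    _ = 1 := hDF.2
    _ ≤ 1 := le_rfl

lemma uniform_isDist (q : ℕ) [NeZero q] : IsDist (fun _ : Fin q => (q:ℝ)⁻¹) := by
  constructor
  · intro x
    positivity
  · have hq : (q:ℝ) ≠ 0 := Nat.cast_ne_zero.mpr (NeZero.ne q)
    simp [Finset.sum_const, Finset.card_univ, hq]

lemma feval_mem {DF : ↥F → ℝ} {D : Fin q → ℝ} (hD : IsDist D) :
    feval F DF D ∈ {s | ∃ D : Fin q → ℝ, IsDist D ∧ s = feval F DF D} :=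
  ⟨D, hD, rfl⟩

lemma bddAbove_inner {DF : ↥F → ℝ} (hDF : IsDist DF) :
    BddAbove {s | ∃ D : Fin q → ℝ, IsDist D ∧ s = feval F DF D} := by
  refine ⟨1, fun s hs => ?_⟩
  obtain ⟨D, hD, rfl⟩ := hs
  exact feval_le_one hDF hD

lemma feval_le_gval {DF : ↥F → ℝ} {D : Fin q → ℝ} (hDF : IsDist DF) (hD : IsDist D) :
    feval F DF D ≤ gval F DF :=
  le_csSup (bddAbove_inner hDF) (feval_mem hD)

lemma gval_nonneg [NeZero q] {DF : ↥F → ℝ} (hDF : IsDist DF) : 0 ≤ gval F DF := by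
  refine le_trans ?_ (feval_le_gval hDF (uniform_isDist q))
  exact feval_nonneg hDF.1 (uniform_isDist q).1

lemma gval_le_one [NeZero q] {DF : ↥F → ℝ} (hDF : IsDist DF) : gval F DF ≤ 1 := by
  refine csSup_le ⟨_, feval_mem (uniform_isDist q)⟩ ?_
  rintro s ⟨D, hD, rfl⟩
  exact feval_le_one hDF hD

end Gval

/-! ### Instance basics and the lower bound -/

section StepA

variable {q k n : ℕ} {F : Finset (CFun q k)}

lemma valOn_nonneg (Ψ : Inst q k n F) (b : Fin n → Fin q) : 0 ≤ Ψ.valOn b := by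
  refine mul_nonneg (inv_nonneg.mpr (W_pos Ψ).le) (Finset.sum_nonneg fun i _ => ?_)
  have : (0:ℝ) ≤ if Ψ.cf i (fun t => b (Ψ.cj i t)) then 1 else 0 := by positivity
  exact mul_nonneg (Ψ.hw i).le this

lemma valOn_le_val [NeZero q] (Ψ : Inst q k n F) (b : Fin n → Fin q) :
    Ψ.valOn b ≤ Ψ.val :=
  le_ciSup (Set.Finite.bddAbove (Set.finite_range _)) b

lemma val_nonneg [NeZero q] (Ψ : Inst q k n F) : 0 ≤ Ψ.val := by
  have : Nonempty (Fin q) := ⟨⟨0, Nat.pos_of_ne_zero (NeZero.ne q)⟩⟩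
  exact le_trans (valOn_nonneg Ψ (Classical.arbitrary _)) (valOn_le_val Ψ _)

lemma val_le [NeZero q] (Ψ : Inst q k n F) (c : ℝ)
    (h : ∀ b : Fin n → Fin q, Ψ.valOn b ≤ c) : Ψ.val ≤ c := by
  have : Nonempty (Fin q) := ⟨⟨0, Nat.pos_of_ne_zero (NeZero.ne q)⟩⟩
  exact ciSup_le h

lemma rho_le_val [NeZero q] (Ψ : Inst q k n F) : rho F ≤ Ψ.val := by
  classical
  have hW : 0 < Ψ.W := W_pos Ψ
  set DF : ↥F → ℝ := fun f => Ψ.W⁻¹ * ∑ i, if Ψ.cf i = (f : CFun q k) then Ψ.w i else 0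
    with hDFdef
  have hrow : ∀ (i : Fin Ψ.m) (X : ↥F → ℝ),
      ∑ f : ↥F, (if Ψ.cf i = (f : CFun q k) then Ψ.w i else 0) * X f
        = Ψ.w i * X ⟨Ψ.cf i, Ψ.hcf i⟩ := by
    intro i X
    rw [Fintype.sum_eq_single (⟨Ψ.cf i, Ψ.hcf i⟩ : ↥F)]
    · rw [if_pos rfl]
    · intro f hf
      rw [if_neg, zero_mul]
      intro h
      exact hf (Subtype.ext h.symm)
  have hswap : ∀ (X : ↥F → ℝ),
      ∑ f : ↥F, DF f * X f = Ψ.W⁻¹ * ∑ i, Ψ.w i * X ⟨Ψ.cf i, Ψ.hcf i⟩ := by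
    intro X
    calc ∑ f : ↥F, DF f * X f
        = ∑ f : ↥F, ∑ i, Ψ.W⁻¹ * ((if Ψ.cf i = (f : CFun q k) then Ψ.w i else 0) * X f) := by
          refine Finset.sum_congr rfl fun f _ => ?_
          rw [hDFdef]
          rw [mul_assoc, Finset.sum_mul, Finset.mul_sum]
      _ = ∑ i, ∑ f : ↥F, Ψ.W⁻¹ * ((if Ψ.cf i = (f : CFun q k) then Ψ.w i else 0) * X f) :=
          Finset.sum_comm
      _ = Ψ.W⁻¹ * ∑ i, Ψ.w i * X ⟨Ψ.cf i, Ψ.hcf i⟩ := by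
          rw [Finset.mul_sum]
          refine Finset.sum_congr rfl fun i _ => ?_
          rw [← Finset.mul_sum, hrow i X]
  have hDFdist : IsDist DF := by
    constructor
    · intro f
      refine mul_nonneg (inv_nonneg.mpr hW.le) (Finset.sum_nonneg fun i _ => ?_)
      split_ifs
      · exact (Ψ.hw i).le
      · exact le_rfl
    · have h := hswap (fun _ => 1)
      simp only [mul_one] at h
      rw [h]
      exact inv_mul_cancel₀ hW.ne'
  have key : ∀ D : Fin q → ℝ, IsDist D → feval F DF D ≤ Ψ.val := by
    intro D hD
    have hval : feval F DF D = ∑ b : Fin n → Fin q, (∏ ℓ, D (b ℓ)) * Ψ.valOn b := by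
      have e1 : feval F DF D
          = ∑ f : ↥F, DF f * ∑ a : Fin k → Fin q,
              (∏ i, D (a i)) * (if (f : CFun q k) a then 1 else 0) := by
        unfold feval
        refine Finset.sum_congr rfl fun f _ => ?_
        rw [Finset.mul_sum]
        refine Finset.sum_congr rfl fun a _ => ?_
        ring
      rw [e1, hswap]
      have e2 : ∀ i : Fin Ψ.m,
          ∑ a : Fin k → Fin q, (∏ t, D (a t)) * (if Ψ.cf i a then 1 else 0)
            = ∑ b : Fin n → Fin q, (∏ ℓ, D (b ℓ))
                * (if Ψ.cf i (fun t => b (Ψ.cj i t)) then 1 else 0) :=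
        fun i => (sum_prod_comp D hD.2 (Ψ.cj i) (Ψ.hcj i)
          (fun a => if Ψ.cf i a then 1 else 0)).symm
      calc Ψ.W⁻¹ * ∑ i, Ψ.w i * ∑ a : Fin k → Fin q,
              (∏ t, D (a t)) * (if Ψ.cf i a then 1 else 0)
          = Ψ.W⁻¹ * ∑ i, ∑ b : Fin n → Fin q, Ψ.w i * ((∏ ℓ, D (b ℓ))
              * (if Ψ.cf i (fun t => b (Ψ.cj i t)) then 1 else 0)) := by
            congr 1
            refine Finset.sum_congr rfl fun i _ => ?_
            rw [e2 i, Finset.mul_sum]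
        _ = Ψ.W⁻¹ * ∑ b : Fin n → Fin q, ∑ i, Ψ.w i * ((∏ ℓ, D (b ℓ))
              * (if Ψ.cf i (fun t => b (Ψ.cj i t)) then 1 else 0)) := by
            rw [Finset.sum_comm]
        _ = ∑ b : Fin n → Fin q, (∏ ℓ, D (b ℓ)) * Ψ.valOn b := by
            rw [Finset.mul_sum]
            refine Finset.sum_congr rfl fun b _ => ?_
            unfold Inst.valOn
            simp only [Finset.mul_sum]
            refine Finset.sum_congr rfl fun i _ => ?_
            ring
    rw [hval]
    have hsum1 : ∑ b : Fin n → Fin q, ∏ ℓ, D (b ℓ) = 1 := sum_dist_pow D hD.2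
    calc ∑ b : Fin n → Fin q, (∏ ℓ, D (b ℓ)) * Ψ.valOn b
        ≤ ∑ b : Fin n → Fin q, (∏ ℓ, D (b ℓ)) * Ψ.val := by
          refine Finset.sum_le_sum fun b _ => ?_
          exact mul_le_mul_of_nonneg_left (valOn_le_val Ψ b)
            (Finset.prod_nonneg fun ℓ _ => hD.1 (b ℓ))
      _ = Ψ.val := by rw [← Finset.sum_mul, hsum1, one_mul]
  have h1 : rho F ≤ gval F DF := by
    rw [rho_eq_inf_gval]
    refine csInf_le ⟨0, ?_⟩ ⟨DF, hDFdist, rfl⟩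
    rintro r ⟨DF', hDF', rfl⟩
    exact gval_nonneg hDF'
  refine h1.trans ?_
  refine csSup_le ⟨_, feval_mem (DF := DF) (uniform_isDist q)⟩ ?_
  rintro s ⟨D, hD, rfl⟩
  exact key D hD

end StepA

/-! ### The upper bound construction -/

section StepB

variable {q k : ℕ} {F : Finset (CFun q k)}

lemma exists_inst_val_le [NeZero q] [NeZero k] (hF : F.Nonempty)
    {DF : ↥F → ℝ} (hDF : IsDist DF) {δ : ℝ} (hδ : 0 < δ) (n : ℕ) (hn : k ≤ n) :
    ∃ Ψ : Inst q k n F, Ψ.val ≤ gval F DF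
      + (((n:ℝ)^k / (Fintype.card {j : Fin k → Fin n // Function.Injective j} : ℝ)) - 1)
      + δ * F.card := by
  classical
  have hk0 : 0 < k := Nat.pos_of_ne_zero (NeZero.ne k)
  have hn0 : 0 < n := lt_of_lt_of_le hk0 hn
  have hnR : (0:ℝ) < n := by exact_mod_cast hn0
  have hFne : Nonempty ↥F := ⟨⟨hF.choose, hF.choose_spec⟩⟩
  have hFcard : 0 < F.card := Finset.card_pos.mpr hF
  have hSubne : Nonempty {j : Fin k → Fin n // Function.Injective j} :=
    ⟨⟨Fin.castLE hn, fun a b hab => by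
      have := congrArg Fin.val hab
      exact Fin.ext (by simpa using this)⟩⟩
  set N : ℕ := Fintype.card {j : Fin k → Fin n // Function.Injective j} with hNdef
  have hN0 : 0 < N := Fintype.card_pos
  have hNR : (0:ℝ) < N := by exact_mod_cast hN0
  have hNnk : (N:ℝ) ≤ (n:ℝ)^k := by
    have h1 : N ≤ Fintype.card (Fin k → Fin n) := Fintype.card_subtype_le _
    have h2 : Fintype.card (Fin k → Fin n) = n ^ k := by
      rw [Fintype.card_fun, Fintype.card_fin, Fintype.card_fin]
    rw [h2] at h1
    exact_mod_cast h1
  have hT : Nonempty (↥F × {j : Fin k → Fin n // Function.Injective j}) := by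
    infer_instance
  set m : ℕ := Fintype.card (↥F × {j : Fin k → Fin n // Function.Injective j}) with hmdef
  set e : Fin m ≃ ↥F × {j : Fin k → Fin n // Function.Injective j} :=
    (Fintype.equivFin _).symm with hedef
  set Ψ : Inst q k n F :=
    { m := m
      hm := Fintype.card_pos
      cf := fun i => ((e i).1 : CFun q k)
      hcf := fun i => (e i).1.2
      cj := fun i => ((e i).2 : Fin k → Fin n)
      hcj := fun i => (e i).2.2
      w := fun i => DF (e i).1 + δ
      hw := fun i => add_pos_of_nonneg_of_pos (hDF.1 _) hδ } with hΨdef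
  refine ⟨Ψ, ?_⟩
  -- total weight
  have hWsum : Ψ.W = (N:ℝ) * (1 + δ * F.card) := by
    unfold Inst.W
    calc ∑ i : Fin m, Ψ.w i
        = ∑ p : ↥F × {j : Fin k → Fin n // Function.Injective j}, (DF p.1 + δ) :=
          Equiv.sum_comp e (fun p => DF p.1 + δ)
      _ = ∑ f : ↥F, ∑ _j : {j : Fin k → Fin n // Function.Injective j}, (DF f + δ) := by
          rw [Fintype.sum_prod_type]
      _ = ∑ f : ↥F, (N:ℝ) * (DF f + δ) := by
          refine Finset.sum_congr rfl fun f _ => ?_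
          rw [Finset.sum_const, Finset.card_univ, nsmul_eq_mul]
      _ = (N:ℝ) * ∑ f : ↥F, (DF f + δ) := by rw [Finset.mul_sum]
      _ = (N:ℝ) * (1 + δ * F.card) := by
          rw [Finset.sum_add_distrib, hDF.2, Finset.sum_const, Finset.card_univ,
            Fintype.card_coe, nsmul_eq_mul]
          ring
  have hWpos : 0 < Ψ.W := W_pos Ψ
  have hWN : (N:ℝ) ≤ Ψ.W := by
    rw [hWsum]
    nlinarith [hδ.le, (Nat.cast_nonneg F.card : (0:ℝ) ≤ F.card), hNR.le,
      mul_nonneg hδ.le (Nat.cast_nonneg F.card : (0:ℝ) ≤ F.card)]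
  refine val_le Ψ _ fun b => ?_
  -- the empirical distribution of b
  set cnt : Fin q → ℝ := fun σ => ((Finset.univ.filter fun ℓ => b ℓ = σ).card : ℝ)
    with hcnt
  set Db : Fin q → ℝ := fun σ => cnt σ / n with hDb
  have hDbdist : IsDist Db := by
    constructor
    · intro σ
      exact div_nonneg (Nat.cast_nonneg _) hnR.le
    · rw [hDb, ← Finset.sum_div, hcnt, count_sum b, div_self hnR.ne']
  -- rewrite the total as a sum over pairs
  have hsum : ∑ i, Ψ.w i * (if Ψ.cf i (fun t => b (Ψ.cj i t)) then 1 else 0)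
      = ∑ p : ↥F × {j : Fin k → Fin n // Function.Injective j},
          (DF p.1 + δ) * (if (p.1 : CFun q k) (fun t => b ((p.2 : Fin k → Fin n) t))
            then 1 else 0) :=
    Equiv.sum_comp e (fun p => (DF p.1 + δ)
      * (if (p.1 : CFun q k) (fun t => b ((p.2 : Fin k → Fin n) t)) then 1 else 0))
  -- bound the δ part
  have hδpart : ∑ p : ↥F × {j : Fin k → Fin n // Function.Injective j},
      δ * (if (p.1 : CFun q k) (fun t => b ((p.2 : Fin k → Fin n) t)) then 1 else 0)
        ≤ δ * ((N:ℝ) * F.card) := by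
    have h1 : ∀ p : ↥F × {j : Fin k → Fin n // Function.Injective j},
        δ * (if (p.1 : CFun q k) (fun t => b ((p.2 : Fin k → Fin n) t)) then 1 else 0)
          ≤ δ := by
      intro p
      split_ifs
      · rw [mul_one]
      · rw [mul_zero]; exact hδ.le
    calc ∑ p : ↥F × {j : Fin k → Fin n // Function.Injective j},
          δ * (if (p.1 : CFun q k) (fun t => b ((p.2 : Fin k → Fin n) t)) then 1 else 0)
        ≤ ∑ _p : ↥F × {j : Fin k → Fin n // Function.Injective j}, δ :=
          Finset.sum_le_sum fun p _ => h1 p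
      _ = δ * ((N:ℝ) * F.card) := by
          rw [Finset.sum_const, Finset.card_univ, nsmul_eq_mul, Fintype.card_prod,
            Fintype.card_coe]
          push_cast
          ring
  -- bound the main part
  have hmain : ∑ p : ↥F × {j : Fin k → Fin n // Function.Injective j},
      DF p.1 * (if (p.1 : CFun q k) (fun t => b ((p.2 : Fin k → Fin n) t)) then 1 else 0)
        ≤ (n:ℝ)^k * gval F DF := by
    have step1 : ∀ f : ↥F,
        ∑ j : {j : Fin k → Fin n // Function.Injective j},
          (if (f : CFun q k) (fun t => b ((j : Fin k → Fin n) t)) then 1 else (0:ℝ))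
        ≤ ∑ j : Fin k → Fin n, (if (f : CFun q k) (fun t => b (j t)) then 1 else 0) := by
      intro f
      rw [← Finset.sum_subtype (Finset.univ.filter fun j : Fin k → Fin n =>
        Function.Injective j) (by simp) (fun j => if (f : CFun q k) (fun t => b (j t))
          then 1 else (0:ℝ))]
      refine Finset.sum_le_sum_of_subset_of_nonneg (Finset.filter_subset _ _) ?_
      intro j _ _
      positivity
    have step2 : ∀ f : ↥F,
        ∑ j : Fin k → Fin n, (if (f : CFun q k) (fun t => b (j t)) then 1 else (0:ℝ))
          = (n:ℝ)^k * ∑ a : Fin k → Fin q, (∏ i, Db (a i))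
              * (if (f : CFun q k) a then 1 else 0) := by
      intro f
      rw [sum_comp_count b (fun a => if (f : CFun q k) a then 1 else (0:ℝ))]
      rw [Finset.mul_sum]
      refine Finset.sum_congr rfl fun a _ => ?_
      have : ∏ i, Db (a i) = (∏ i, cnt (a i)) / (n:ℝ)^k := by
        rw [hDb]
        rw [Finset.prod_div_distrib, Finset.prod_const, Finset.card_univ,
          Fintype.card_fin]
      rw [this]
      field_simp
      split_ifs <;> ring
    calc ∑ p : ↥F × {j : Fin k → Fin n // Function.Injective j},
          DF p.1 * (if (p.1 : CFun q k) (fun t => b ((p.2 : Fin k → Fin n) t))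
            then 1 else 0)
        = ∑ f : ↥F, DF f * ∑ j : {j : Fin k → Fin n // Function.Injective j},
            (if (f : CFun q k) (fun t => b ((j : Fin k → Fin n) t)) then 1 else 0) := by
          rw [Fintype.sum_prod_type]
          exact Finset.sum_congr rfl fun f _ => by rw [Finset.mul_sum]
      _ ≤ ∑ f : ↥F, DF f * ((n:ℝ)^k * ∑ a : Fin k → Fin q, (∏ i, Db (a i))
            * (if (f : CFun q k) a then 1 else 0)) := by
          refine Finset.sum_le_sum fun f _ => ?_
          rw [← step2 f]
          exact mul_le_mul_of_nonneg_left (step1 f) (hDF.1 f)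
      _ = (n:ℝ)^k * feval F DF Db := by
          unfold feval
          rw [Finset.mul_sum]
          refine Finset.sum_congr rfl fun f _ => ?_
          rw [Finset.mul_sum, Finset.mul_sum, Finset.mul_sum]
          refine Finset.sum_congr rfl fun a _ => ?_
          ring
      _ ≤ (n:ℝ)^k * gval F DF := by
          refine mul_le_mul_of_nonneg_left (feval_le_gval hDF hDbdist) (by positivity)
  -- put the pieces together
  have hval : Ψ.valOn b ≤ Ψ.W⁻¹ * ((n:ℝ)^k * gval F DF + δ * ((N:ℝ) * F.card)) := by
    unfold Inst.valOn
    refine mul_le_mul_of_nonneg_left ?_ (inv_nonneg.mpr hWpos.le)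
    rw [hsum]
    calc ∑ p : ↥F × {j : Fin k → Fin n // Function.Injective j},
          (DF p.1 + δ) * (if (p.1 : CFun q k) (fun t => b ((p.2 : Fin k → Fin n) t))
            then 1 else 0)
        = (∑ p : ↥F × {j : Fin k → Fin n // Function.Injective j},
            DF p.1 * (if (p.1 : CFun q k) (fun t => b ((p.2 : Fin k → Fin n) t))
              then 1 else 0))
          + ∑ p : ↥F × {j : Fin k → Fin n // Function.Injective j},
            δ * (if (p.1 : CFun q k) (fun t => b ((p.2 : Fin k → Fin n) t))
              then 1 else 0) := by
          rw [← Finset.sum_add_distrib]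
          exact Finset.sum_congr rfl fun p _ => by ring
      _ ≤ (n:ℝ)^k * gval F DF + δ * ((N:ℝ) * F.card) := add_le_add hmain hδpart
  have hgv0 : 0 ≤ gval F DF := gval_nonneg hDF
  have hgv1 : gval F DF ≤ 1 := gval_le_one hDF
  have hinv : Ψ.W⁻¹ ≤ (N:ℝ)⁻¹ := inv_anti₀ hNR hWN
  clear hΨdef hsum hδpart hmain hWsum
  clear_value Ψ N
  have h2 : 0 ≤ (n:ℝ)^k * gval F DF + δ * ((N:ℝ) * F.card) :=
    add_nonneg (mul_nonneg (pow_nonneg (Nat.cast_nonneg n) k) hgv0)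
      (mul_nonneg hδ.le (mul_nonneg hNR.le (Nat.cast_nonneg F.card)))
  have h3 : Ψ.valOn b ≤ (N:ℝ)⁻¹ * ((n:ℝ)^k * gval F DF + δ * ((N:ℝ) * F.card)) :=
    hval.trans (mul_le_mul_of_nonneg_right hinv h2)
  have h4 : (N:ℝ)⁻¹ * ((n:ℝ)^k * gval F DF + δ * ((N:ℝ) * F.card))
      = ((n:ℝ)^k / (N:ℝ)) * gval F DF + δ * F.card := by
    field_simp
  have h5 : ((n:ℝ)^k / N) * gval F DF ≤ gval F DF + ((n:ℝ)^k / N - 1) := by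
    have h6 : (1:ℝ) ≤ (n:ℝ)^k / N := (one_le_div hNR).mpr hNnk
    nlinarith
  rw [h4] at h3
  linarith

end StepB

/-! ### Counting injective tuples, and the main theorem -/

lemma N_lower (k n : ℕ) :
    (n + 1 - k)^k ≤ Fintype.card {j : Fin k → Fin n // Function.Injective j} := by
  classical
  have h1 : Fintype.card {j : Fin k → Fin n // Function.Injective j}
      = Fintype.card (Fin k ↪ Fin n) :=
    Fintype.card_congr (Equiv.subtypeInjectiveEquivEmbedding _ _)
  rw [h1, Fintype.card_embedding_eq, Fintype.card_fin, Fintype.card_fin]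
  exact Nat.pow_sub_le_descFactorial n k

/-- Proposition 2.10 of the paper: `ρ_min(F) = ρ(F)`. -/
theorem rhoMin_eq_rho (q k : ℕ) [NeZero q] [NeZero k]
    (F : Finset (CFun q k)) (hF : F.Nonempty) :
    rhoMin F = rho F := by
  classical
  have hk0 : 0 < k := Nat.pos_of_ne_zero (NeZero.ne k)
  have hFcard : 0 < F.card := Finset.card_pos.mpr hF
  have hFcardR : (0:ℝ) < F.card := by exact_mod_cast hFcard
  have hFne : Nonempty ↥F := ⟨⟨hF.choose, hF.choose_spec⟩⟩
  have hUdist : IsDist (fun _ : ↥F => (F.card:ℝ)⁻¹) := by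
    constructor
    · intro _
      positivity
    · rw [Finset.sum_const, Finset.card_univ, Fintype.card_coe, nsmul_eq_mul]
      field_simp
  have houter_ne : {r | ∃ DF : ↥F → ℝ, IsDist DF ∧ r = gval F DF}.Nonempty :=
    ⟨_, _, hUdist, rfl⟩
  have hinst_ne : {r | ∃ (n : ℕ) (Ψ : Inst q k n F), r = Ψ.val}.Nonempty := by
    obtain ⟨Ψ, _⟩ := exists_inst_val_le hF hUdist one_pos k le_rfl
    exact ⟨Ψ.val, k, Ψ, rfl⟩
  have hinst_bdd : BddBelow {r | ∃ (n : ℕ) (Ψ : Inst q k n F), r = Ψ.val} := by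
    refine ⟨0, ?_⟩
    rintro r ⟨n, Ψ, rfl⟩
    exact val_nonneg Ψ
  have hge : rho F ≤ rhoMin F := by
    unfold rhoMin
    refine le_csInf hinst_ne ?_
    rintro r ⟨n, Ψ, rfl⟩
    exact rho_le_val Ψ
  have hle : rhoMin F ≤ rho F := by
    refine le_of_forall_pos_le_add fun ε hε => ?_
    -- choose a near-optimal distribution on F
    have hlt : sInf {r | ∃ DF : ↥F → ℝ, IsDist DF ∧ r = gval F DF} < rho F + ε/3 := by
      rw [← rho_eq_inf_gval]
      linarith
    obtain ⟨r, hrmem, hrlt⟩ := exists_lt_of_csInf_lt houter_ne hlt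
    obtain ⟨DF, hDF, rfl⟩ := hrmem
    -- choose M so that ((M+1)/M)^k is close to 1
    have htend : Filter.Tendsto (fun M : ℕ => ((1:ℝ) + 1/M)^k) Filter.atTop (nhds 1) := by
      have h0 : Filter.Tendsto (fun M : ℕ => (1:ℝ) + 1/M) Filter.atTop (nhds (1 + 0)) :=
        Filter.Tendsto.add tendsto_const_nhds tendsto_one_div_atTop_nhds_zero_nat
    
      have h1 := h0.pow k
      norm_num at h1
      convert h1 using 2
      norm_num
    have hev := htend.eventually_lt_const (show (1:ℝ) < 1 + ε/3 by linarith)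
    obtain ⟨M₀, hM₀⟩ := Filter.eventually_atTop.mp hev
    set M : ℕ := max M₀ 1 with hMdef
    have hM1 : 1 ≤ M := le_max_right _ _
    have hMR : (0:ℝ) < M := by exact_mod_cast lt_of_lt_of_le one_pos hM1
    have hMbound : ((1:ℝ) + 1/M)^k < 1 + ε/3 := hM₀ M (le_max_left _ _)
    set n : ℕ := k * (M + 1) with hndef
    have hn : k ≤ n := Nat.le_mul_of_pos_right k (by omega)
    set δ : ℝ := ε / (3 * F.card) with hδdef
    have hδ : 0 < δ := by positivity
    obtain ⟨Ψ, hΨ⟩ := exists_inst_val_le hF hDF hδ n hn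
    set N : ℕ := Fintype.card {j : Fin k → Fin n // Function.Injective j} with hNdef
    have hN0 : 0 < N :=
      lt_of_lt_of_le (pow_pos (show 0 < n + 1 - k by omega) k) (N_lower k n)
    have hNR : (0:ℝ) < N := by exact_mod_cast hN0
    have hNlow : ((k*M:ℕ)^k : ℝ) ≤ (N:ℝ) := by
      have h1 : (k*M)^k ≤ (n + 1 - k)^k := by
        refine Nat.pow_le_pow_left ?_ k
        have h2 : n = k*M + k := by rw [hndef]; ring
        omega
      have h2 := (N_lower k n).trans_eq hNdef.symm
      exact_mod_cast h1.trans h2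
    have hratio : (n:ℝ)^k / N ≤ ((1:ℝ) + 1/M)^k := by
      rw [div_le_iff₀ hNR]
      have hnMk : (n:ℝ) = ((1:ℝ) + 1/M) * (k*M : ℕ) := by
        push_cast [hndef]
        field_simp
      calc (n:ℝ)^k = ((1:ℝ) + 1/M)^k * ((k*M:ℕ):ℝ)^k := by
            rw [hnMk, mul_pow]
        _ ≤ ((1:ℝ) + 1/M)^k * N := by
            refine mul_le_mul_of_nonneg_left hNlow ?_
            positivity
    have hδF : δ * F.card = ε/3 := by
      rw [hδdef]
      field_simp
    have hfin : Ψ.val ≤ rho F + ε := by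
      refine hΨ.trans ?_
      have h1 : gval F DF < rho F + ε/3 := hrlt
      have h2 : (n:ℝ)^k / N - 1 < ε/3 := by
        have := hratio.trans_lt hMbound
        linarith
      rw [hδF]
      linarith
    have h3 : rhoMin F ≤ Ψ.val := by
      unfold rhoMin
      exact csInf_le hinst_bdd ⟨n, Ψ, rfl⟩
    linarith
  linarith
end

section
/- Let q = k = 2 and let F ⊆ {f : [2]² → {0,1}} be a finite family. If D_Y, D_N ∈ Δ(F×[2]²) satisfy μ(D_Y) = μ(D_N), then (D_Y, D_N) is a padded one-wise pair. -/
open scoped Classical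

/-- A distribution on `F × [2]²` is one-wise independent if its marginals are uniform. -/
def oneWise {q k : ℕ} (F : Finset (CFun q k)) (D : ↥F × (Fin k → Fin q) → ℝ) : Prop :=
  ∀ (f : ↥F) (i : Fin k) (σ σ' : Fin q),
    marginal F D (f, i, σ) = marginal F D (f, i, σ')


lemma sum_fn_aux (h : (Fin 2 → Fin 2) → ℝ) :
    ∑ a, h a = h ![0,0] + h ![0,1] + h ![1,0] + h ![1,1] := by
  rw [← (finTwoArrowEquiv (Fin 2)).symm.sum_comp]
  simp [Fintype.sum_prod_type, Fin.sum_univ_two, finTwoArrowEquiv]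
  ring

lemma quad_aux (x00 x01 x10 x11 y00 y01 y10 y11 : ℝ)
    (h1 : x00 + x01 = y00 + y01) (h2 : x10 + x11 = y10 + y11)
    (h3 : x00 + x10 = y00 + y10) :
    (x00 - min x00 y00) + (x01 - min x01 y01) = (x10 - min x10 y10) + (x11 - min x11 y11)
    ∧ (x00 - min x00 y00) + (x10 - min x10 y10)
        = (x01 - min x01 y01) + (x11 - min x11 y11) := by
  constructor <;> (simp only [min_def]; split_ifs <;> linarith)

lemma marginal_div_aux {q k : ℕ} (F : Finset (CFun q k))
    (D : ↥F × (Fin k → Fin q) → ℝ) (c : ℝ) (x : ↥F × Fin k × Fin q) :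
    marginal F (fun p => D p / c) x = marginal F D x / c := by
  simp only [marginal, Finset.sum_div]
  exact Finset.sum_congr rfl fun a _ => by split_ifs <;> simp

lemma onewise_core_aux (F : Finset (CFun 2 2)) (DY DN : ↥F × (Fin 2 → Fin 2) → ℝ)
    (hmarg : marginal F DY = marginal F DN) :
    oneWise F (fun p => DY p - min (DY p) (DN p)) := by
  intro f i σ σ'
  have h : ∀ (i σ : Fin 2), marginal F DY (f, i, σ) = marginal F DN (f, i, σ) :=
    fun i σ => congrFun hmarg (f, i, σ)
  simp only [marginal] at h ⊢
  have h00 := h 0 0; have h01 := h 0 1; have h10 := h 1 0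
  rw [sum_fn_aux, sum_fn_aux] at h00 h01 h10
  norm_num [show (1:Fin 2) ≠ 0 by decide, show (0:Fin 2) ≠ 1 by decide] at h00 h01 h10
  have Q := quad_aux _ _ _ _ _ _ _ _ h00 h01 h10
  fin_cases i <;> fin_cases σ <;> fin_cases σ' <;>
    simp only [sum_fn_aux] <;>
    norm_num [Fin.mk_zero, Fin.mk_one, show (1:Fin 2) ≠ 0 by decide,
      show (0:Fin 2) ≠ 1 by decide] <;>
    linarith [Q.1, Q.2]

lemma onewise_div_aux (F : Finset (CFun 2 2)) (D : ↥F × (Fin 2 → Fin 2) → ℝ) (c : ℝ)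
    (hD : oneWise F D) : oneWise F (fun p => D p / c) := by
  intro f i σ σ'
  rw [marginal_div_aux, marginal_div_aux, hD f i σ σ']

lemma onewise_unif_aux (F : Finset (CFun 2 2)) (D : ↥F × (Fin 2 → Fin 2) → ℝ) :
    oneWise F (fun p : ↥F × (Fin 2 → Fin 2) => (∑ b : Fin 2 → Fin 2, D (p.1, b)) / 4) := by
  intro f i σ σ'
  simp only [marginal]
  fin_cases i <;> fin_cases σ <;> fin_cases σ' <;>
    simp only [sum_fn_aux] <;>
    norm_num [Fin.mk_zero, Fin.mk_one, show (1:Fin 2) ≠ 0 by decide,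
      show (0:Fin 2) ≠ 1 by decide]

lemma isdist_unif_aux (F : Finset (CFun 2 2)) (D : ↥F × (Fin 2 → Fin 2) → ℝ)
    (hD : IsDist D) : IsDist (fun p : ↥F × (Fin 2 → Fin 2) => (∑ b : Fin 2 → Fin 2, D (p.1, b)) / 4) := by
  constructor
  · intro p
    exact div_nonneg (Finset.sum_nonneg fun b _ => hD.1 _) (by norm_num)
  · rw [Fintype.sum_prod_type]
    have : ∀ f : ↥F, ∑ a : Fin 2 → Fin 2, (∑ b : Fin 2 → Fin 2, D (f, b)) / 4
        = ∑ b : Fin 2 → Fin 2, D (f, b) := by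
      intro f
      rw [Finset.sum_const]
      simp
      ring
    rw [Finset.sum_congr rfl fun f _ => this f, ← Fintype.sum_prod_type]
    exact hD.2

/-- Proposition 2.12 of the paper: for `q = k = 2`, any two distributions on `F × [2]²`
with matching marginals form a padded one-wise pair. -/
theorem matching_marginals_padded_onewise (F : Finset (CFun 2 2))
    (DY DN : ↥F × (Fin 2 → Fin 2) → ℝ) (hDY : IsDist DY) (hDN : IsDist DN)
    (hmarg : marginal F DY = marginal F DN) :
    ∃ (D0 D1 D2 : ↥F × (Fin 2 → Fin 2) → ℝ) (τ : ℝ),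
      IsDist D0 ∧ IsDist D1 ∧ IsDist D2 ∧ τ ∈ Set.Icc (0 : ℝ) 1 ∧
      oneWise F D1 ∧ oneWise F D2 ∧
      DY = (fun p => τ * D0 p + (1 - τ) * D1 p) ∧
      DN = (fun p => τ * D0 p + (1 - τ) * D2 p) := by
  classical
  have hE0 : ∀ p, 0 ≤ min (DY p) (DN p) := fun p => le_min (hDY.1 p) (hDN.1 p)
  have hEY : ∀ p, min (DY p) (DN p) ≤ DY p := fun p => min_le_left _ _
  have hEN : ∀ p, min (DY p) (DN p) ≤ DN p := fun p => min_le_right _ _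
  set τ : ℝ := ∑ p, min (DY p) (DN p) with hτdef
  have hτ0 : 0 ≤ τ := Finset.sum_nonneg fun p _ => hE0 p
  have hτ1 : τ ≤ 1 := by
    rw [hτdef, ← hDY.2]; exact Finset.sum_le_sum fun p _ => hEY p
  by_cases hcase : τ = 1
  · -- DY = DN pointwise
    have hYE : ∀ p, DY p = min (DY p) (DN p) := by
      have hsum : ∑ p, (DY p - min (DY p) (DN p)) = 0 := by
        rw [Finset.sum_sub_distrib, hDY.2, ← hτdef, hcase]; ring
      intro p
      have := (Finset.sum_eq_zero_iff_of_nonneg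
        (fun p _ => sub_nonneg.2 (hEY p))).1 hsum p (Finset.mem_univ p)
      linarith
    have hNE : ∀ p, DN p = min (DY p) (DN p) := by
      have hsum : ∑ p, (DN p - min (DY p) (DN p)) = 0 := by
        rw [Finset.sum_sub_distrib, hDN.2, ← hτdef, hcase]; ring
      intro p
      have := (Finset.sum_eq_zero_iff_of_nonneg
        (fun p _ => sub_nonneg.2 (hEN p))).1 hsum p (Finset.mem_univ p)
      linarith
    refine ⟨DY, fun p : ↥F × (Fin 2 → Fin 2) => (∑ b : Fin 2 → Fin 2, DY (p.1, b)) / 4,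
      fun p : ↥F × (Fin 2 → Fin 2) => (∑ b : Fin 2 → Fin 2, DY (p.1, b)) / 4, 1,
      hDY, isdist_unif_aux F DY hDY, isdist_unif_aux F DY hDY,
      ⟨by norm_num, le_refl 1⟩, onewise_unif_aux F DY, onewise_unif_aux F DY, ?_, ?_⟩
    · funext p; ring
    · funext p; rw [hNE p, ← hYE p]; ring
  · have hτlt : τ < 1 := lt_of_le_of_ne hτ1 hcase
    have h1τ : (0:ℝ) < 1 - τ := by linarith
    have hD0 : ∃ D0 : ↥F × (Fin 2 → Fin 2) → ℝ,
        IsDist D0 ∧ ∀ p, τ * D0 p = min (DY p) (DN p) := by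
      by_cases hz : τ = 0
      · refine ⟨DY, hDY, fun p => ?_⟩
        have hsum : ∑ p, min (DY p) (DN p) = 0 := by rw [← hτdef, hz]
        have := (Finset.sum_eq_zero_iff_of_nonneg
          (fun p _ => hE0 p)).1 hsum p (Finset.mem_univ p)
        rw [hz, this]; ring
      · have hτpos : 0 < τ := lt_of_le_of_ne hτ0 (Ne.symm hz)
        refine ⟨fun p => min (DY p) (DN p) / τ,
          ⟨fun p => div_nonneg (hE0 p) hτpos.le, ?_⟩,
          fun p => mul_div_cancel₀ _ hz⟩
        rw [← Finset.sum_div, ← hτdef, div_self hz]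
    obtain ⟨D0, hD0dist, hD0eq⟩ := hD0
    have hsub1 : ∑ p, (DY p - min (DY p) (DN p)) = 1 - τ := by
      rw [Finset.sum_sub_distrib, hDY.2, ← hτdef]
    have hsub2 : ∑ p, (DN p - min (DY p) (DN p)) = 1 - τ := by
      rw [Finset.sum_sub_distrib, hDN.2, ← hτdef]
    refine ⟨D0, fun p => (DY p - min (DY p) (DN p)) / (1 - τ),
      fun p => (DN p - min (DY p) (DN p)) / (1 - τ), τ,
      hD0dist,
      ⟨fun p => div_nonneg (sub_nonneg.2 (hEY p)) h1τ.le,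
        by rw [← Finset.sum_div, hsub1, div_self h1τ.ne']⟩,
      ⟨fun p => div_nonneg (sub_nonneg.2 (hEN p)) h1τ.le,
        by rw [← Finset.sum_div, hsub2, div_self h1τ.ne']⟩,
      ⟨hτ0, hτ1⟩, ?_, ?_, ?_, ?_⟩
    · exact onewise_div_aux F _ _ (onewise_core_aux F DY DN hmarg)
    · have h2 : oneWise F (fun p => DN p - min (DY p) (DN p)) := by
        have := onewise_core_aux F DN DY hmarg.symm
        have heq : (fun p => DN p - min (DN p) (DY p))
            = (fun p => DN p - min (DY p) (DN p)) := by
          funext p; rw [min_comm]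
        rwa [heq] at this
      exact onewise_div_aux F _ _ h2
    · funext p
      rw [mul_div_cancel₀ _ h1τ.ne', hD0eq p]
      ring
    · funext p
      rw [mul_div_cancel₀ _ h1τ.ne', hD0eq p]
      ring
end

section
/- Let k ≥ 1 and q_1,…,q_k ≥ 1, and let Q = [q_1]×···×[q_k]. Let (μ_{i,σ})_{i∈[k],σ∈[q_i]} be real numbers with μ_{i,σ} ≥ 0 and Σ_{σ∈[q_i]} μ_{i,σ} = 1 for every i ∈ [k]. Then there exists a unique probability distribution D on Q such that supp(D) is a chain and Pr_{a∼D}[a_i = σ] = μ_{i,σ} for all i ∈ [k] and σ ∈ [q_i]. -/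
open scoped Classical

/-!
Existence is the quantile coupling: draw `t` uniformly from `[0, 1)` and map it to the point
whose `i`-th coordinate is the `μ i`-quantile of `t`. The quantile functions are monotone, so
the image of `[0, 1)` is a chain, and the `i`-th coordinate of the image has law `μ i`.

Uniqueness: for a distribution `D` supported on a chain, the sets
`{x ∈ supp D | x i ≤ a i}` are nested, so the mass of the lower set of `a` is
`min_i F_i (a i)`, where `F_i` is the cumulative distribution function of the `i`-th
marginal. The masses of all lower sets determine `D` by Möbius inversion.
-/

open Finset MeasureTheory

lemma sum_filter_le_eq_sum_filter_lt_add {α M : Type*} [Fintype α] [PartialOrder α]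
    [DecidableLE α] [DecidableLT α] [AddCommMonoid M] (g : α → M) (σ : α) :
    ∑ τ with τ ≤ σ, g τ = ∑ τ with τ < σ, g τ + g σ := by
  have h : univ.filter (· ≤ σ) = insert σ (univ.filter (· < σ)) := by
    ext τ
    simp [le_iff_lt_or_eq, or_comm]
  rw [h, sum_insert (by simp), add_comm]

lemma eq_of_forall_sum_filter_le_eq {Ω M : Type*} [Fintype Ω] [PartialOrder Ω] [DecidableLE Ω]
    [AddCommGroup M] {f g : Ω → M} (h : ∀ a, ∑ x with x ≤ a, f x = ∑ x with x ≤ a, g x) :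
    f = g := by
  funext a
  induction a using WellFoundedLT.induction with
  | _ a ih =>
    have hlt : ∑ x with x < a, f x = ∑ x with x < a, g x :=
      sum_congr rfl fun x hx => ih x (by simpa using hx)
    have ha := h a
    rw [sum_filter_le_eq_sum_filter_lt_add, sum_filter_le_eq_sum_filter_lt_add, hlt] at ha
    exact add_left_cancel ha

section QuantileInterval

variable {α : Type*} [Fintype α] [LinearOrder α] {f : α → ℝ}

/-- The levels `t` at which the quantile function of the weights `f` takes the value `σ`. -/
def quantileInterval (f : α → ℝ) (σ : α) : Set ℝ :=
  Set.Ico (∑ τ with τ < σ, f τ) (∑ τ with τ ≤ σ, f τ)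

lemma sum_filter_le_le_sum_filter_lt (hf : ∀ σ, 0 ≤ f σ) {σ τ : α} (h : σ < τ) :
    ∑ ρ with ρ ≤ σ, f ρ ≤ ∑ ρ with ρ < τ, f ρ :=
  sum_le_sum_of_subset_of_nonneg (fun ρ hρ => by simpa using (mem_filter.1 hρ).2.trans_lt h)
    fun ρ _ _ => hf ρ

lemma le_of_mem_quantileInterval (hf : ∀ σ, 0 ≤ f σ) {σ τ : α} {s t : ℝ}
    (hs : s ∈ quantileInterval f σ) (ht : t ∈ quantileInterval f τ) (hst : s ≤ t) : σ ≤ τ :=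
  le_of_not_gt fun h => by
    linarith [sum_filter_le_le_sum_filter_lt hf h, hs.1, ht.2]

lemma eq_of_mem_quantileInterval (hf : ∀ σ, 0 ≤ f σ) {σ τ : α} {t : ℝ}
    (hσ : t ∈ quantileInterval f σ) (hτ : t ∈ quantileInterval f τ) : σ = τ :=
  le_antisymm (le_of_mem_quantileInterval hf hσ hτ le_rfl)
    (le_of_mem_quantileInterval hf hτ hσ le_rfl)

lemma quantileInterval_subset_Ico (hf : ∀ σ, 0 ≤ f σ) (σ : α) :
    quantileInterval f σ ⊆ Set.Ico 0 (∑ τ, f τ) := fun _ ht =>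
  ⟨(sum_nonneg fun τ _ => hf τ).trans ht.1,
    ht.2.trans_le (sum_le_univ_sum_of_nonneg hf)⟩

lemma volume_real_quantileInterval (σ : α) (hσ : 0 ≤ f σ) :
    volume.real (quantileInterval f σ) = f σ := by
  rw [quantileInterval, sum_filter_le_eq_sum_filter_lt_add,
    Real.volume_real_Ico_of_le (by linarith)]
  ring

lemma exists_mem_quantileInterval {t : ℝ} (ht0 : 0 ≤ t) (ht : t < ∑ σ, f σ) :
    ∃ σ, t ∈ quantileInterval f σ := by
  obtain ⟨σ₀, -⟩ := nonempty_of_sum_ne_zero (by linarith : ∑ σ, f σ ≠ 0)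
  have : Nonempty α := ⟨σ₀⟩
  obtain ⟨top, htop⟩ : ∃ top : α, ∀ σ, σ ≤ top := Finite.exists_max id
  have hS : (univ.filter fun σ => t < ∑ τ with τ ≤ σ, f τ).Nonempty :=
    ⟨top, mem_filter.2 ⟨mem_univ _, by rwa [filter_true_of_mem fun τ _ => htop τ]⟩⟩
  have hσ := min'_mem _ hS
  set σ := min' _ hS
  refine ⟨σ, ?_, (mem_filter.1 hσ).2⟩
  by_cases hlt : (univ.filter (· < σ)).Nonempty
  · have hρσ := (mem_filter.1 (max'_mem _ hlt)).2
    set ρ := max' _ hlt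
    have hρ : univ.filter (· < σ) = univ.filter (· ≤ ρ) := by
      ext τ
      simp only [mem_filter, mem_univ, true_and]
      exact ⟨fun h => le_max' _ τ (by simpa using h), fun h => h.trans_lt hρσ⟩
    rw [hρ]
    by_contra h
    exact hρσ.not_ge (min'_le _ ρ (by simpa using not_le.1 h))
  · simpa [not_nonempty_iff_eq_empty.1 hlt] using ht0

end QuantileInterval

section CanonicalDist

variable {ι : Type*} {α : ι → Type*} [∀ i, Fintype (α i)] [∀ i, LinearOrder (α i)]
  {μ : ∀ i, α i → ℝ}

/-- The levels `t` whose coordinatewise quantiles form the point `a`. -/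
def quantileBox (μ : ∀ i, α i → ℝ) (a : ∀ i, α i) : Set ℝ :=
  ⋂ i, quantileInterval (μ i) (a i)

noncomputable def canonicalDist (μ : ∀ i, α i → ℝ) (a : ∀ i, α i) : ℝ :=
  volume.real (quantileBox μ a)

lemma le_of_mem_quantileBox (hμ0 : ∀ i σ, 0 ≤ μ i σ) {a b : ∀ i, α i} {s t : ℝ}
    (hs : s ∈ quantileBox μ a) (ht : t ∈ quantileBox μ b) (hst : s ≤ t) : a ≤ b := fun i =>
  le_of_mem_quantileInterval (hμ0 i) (Set.mem_iInter.1 hs i) (Set.mem_iInter.1 ht i) hst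

lemma pairwiseDisjoint_quantileBox (hμ0 : ∀ i σ, 0 ≤ μ i σ) (s : Set (∀ i, α i)) :
    s.PairwiseDisjoint (quantileBox μ) := fun _ _ _ _ hab =>
  Set.disjoint_left.2 fun _ ha hb => hab <| funext fun i =>
    eq_of_mem_quantileInterval (hμ0 i) (Set.mem_iInter.1 ha i) (Set.mem_iInter.1 hb i)

lemma isChain_canonicalDist (hμ0 : ∀ i σ, 0 ≤ μ i σ) :
    IsChain (· ≤ ·) {a | canonicalDist μ a ≠ 0} := by
  have hne {a : ∀ i, α i} (ha : canonicalDist μ a ≠ 0) : (quantileBox μ a).Nonempty :=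
    Set.nonempty_iff_ne_empty.2 fun h => ha (by simp [canonicalDist, h])
  intro a ha b hb _
  obtain ⟨s, hs⟩ := hne ha
  obtain ⟨t, ht⟩ := hne hb
  rcases le_total s t with hst | hts
  · exact .inl (le_of_mem_quantileBox hμ0 hs ht hst)
  · exact .inr (le_of_mem_quantileBox hμ0 ht hs hts)

variable [Fintype ι] [DecidableEq ι] [∀ i, DecidableEq (α i)]

lemma biUnion_quantileBox_apply_eq (hμ0 : ∀ i σ, 0 ≤ μ i σ) (hμ1 : ∀ i, ∑ σ, μ i σ = 1)
    (i : ι) (σ : α i) :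
    ⋃ a ∈ ({a | a i = σ} : Finset (∀ i, α i)), quantileBox μ a = quantileInterval (μ i) σ := by
  refine subset_antisymm (Set.iUnion₂_subset fun a ha t ht => ?_) fun t ht => ?_
  · simpa [(mem_filter.1 ha).2] using Set.mem_iInter.1 ht i
  · have ht01 := quantileInterval_subset_Ico (hμ0 i) σ ht
    rw [hμ1] at ht01
    choose a ha using fun j =>
      exists_mem_quantileInterval (f := μ j) ht01.1 (by rw [hμ1]; exact ht01.2)
    have hai : a i = σ := eq_of_mem_quantileInterval (hμ0 i) (ha i) ht
    exact Set.mem_biUnion (by simp [hai]) (Set.mem_iInter.2 ha)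

lemma canonicalDist_marginal (hμ0 : ∀ i σ, 0 ≤ μ i σ) (hμ1 : ∀ i, ∑ σ, μ i σ = 1)
    (i : ι) (σ : α i) :
    (∑ a : ∀ i, α i, if a i = σ then canonicalDist μ a else 0) = μ i σ := by
  have hfin (a : ∀ i, α i) : volume (quantileBox μ a) ≠ ⊤ :=
    ((measure_mono (Set.iInter_subset _ i)).trans_lt (measure_Ico_lt_top (α := ℝ))).ne
  unfold canonicalDist
  rw [← sum_filter, ← measureReal_biUnion_finset (pairwiseDisjoint_quantileBox hμ0 _)
    (fun a _ => MeasurableSet.iInter fun j => measurableSet_Ico) fun a _ => hfin a,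
    biUnion_quantileBox_apply_eq hμ0 hμ1, volume_real_quantileInterval σ (hμ0 i σ)]

lemma sum_canonicalDist [Nonempty ι] (hμ0 : ∀ i σ, 0 ≤ μ i σ) (hμ1 : ∀ i, ∑ σ, μ i σ = 1) :
    ∑ a, canonicalDist μ a = 1 := by
  obtain ⟨i⟩ := ‹Nonempty ι›
  rw [← sum_fiberwise univ (fun a => a i), ← hμ1 i]
  refine sum_congr rfl fun σ _ => ?_
  rw [← canonicalDist_marginal hμ0 hμ1 i σ, sum_filter]

end CanonicalDist

section ChainSupport

variable {ι : Type*} [Fintype ι] {α : ι → Type*} [∀ i, Preorder (α i)]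

lemma IsChain.exists_filter_apply_le_subset [Nonempty ι] {S : Finset (∀ i, α i)}
    (hS : IsChain (· ≤ ·) (S : Set (∀ i, α i))) (a : ∀ i, α i) :
    ∃ i₀, ∀ i, {x ∈ S | x i₀ ≤ a i₀} ⊆ {x ∈ S | x i ≤ a i} := by
  have htotal (i j : ι) : {x ∈ S | x i ≤ a i} ⊆ {x ∈ S | x j ≤ a j} ∨
      {x ∈ S | x j ≤ a j} ⊆ {x ∈ S | x i ≤ a i} := by
    refine or_iff_not_imp_left.2 fun hij y hy => ?_
    obtain ⟨x, hxi, hxj⟩ := not_subset.1 hij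
    simp only [mem_filter] at hxi hxj hy ⊢
    refine ⟨hy.1, ?_⟩
    rcases hS.total hxi.1 hy.1 with hxy | hyx
    · exact absurd ⟨hxi.1, (hxy j).trans hy.2⟩ hxj
    · exact (hyx i).trans hxi.2
  obtain ⟨i₀, hi₀⟩ : ∃ i₀, ∀ i, #{x ∈ S | x i₀ ≤ a i₀} ≤ #{x ∈ S | x i ≤ a i} :=
    Finite.exists_min _
  refine ⟨i₀, fun i => (htotal i₀ i).elim id fun h => ?_⟩
  exact (eq_of_subset_of_card_le h (hi₀ i)).ge

variable [DecidableEq ι] [∀ i, Fintype (α i)]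

lemma sum_filter_le_eq_inf'_of_isChain [Nonempty ι] {D : (∀ i, α i) → ℝ} (hD : ∀ x, 0 ≤ D x)
    (hchain : IsChain (· ≤ ·) {x | D x ≠ 0}) (a : ∀ i, α i) :
    ∑ x with x ≤ a, D x = univ.inf' univ_nonempty fun i => ∑ x with x i ≤ a i, D x := by
  set S : Finset (∀ i, α i) := {x | D x ≠ 0}
  have hsupp (p : (∀ i, α i) → Prop) [DecidablePred p] :
      ∑ x with p x, D x = ∑ x ∈ S with p x, D x := by
    rw [filter_comm, sum_filter_ne_zero]
  obtain ⟨i₀, hi₀⟩ :=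
    IsChain.exists_filter_apply_le_subset (S := S) (by simpa [S] using hchain) a
  have hlow : {x ∈ S | x ≤ a} = {x ∈ S | x i₀ ≤ a i₀} := by
    ext x
    refine ⟨fun hx => ?_, fun hx => ?_⟩
    · rw [mem_filter] at hx ⊢
      exact ⟨hx.1, hx.2 i₀⟩
    · exact mem_filter.2 ⟨(mem_filter.1 hx).1, fun i => (mem_filter.1 (hi₀ i hx)).2⟩
  rw [hsupp, hlow]
  refine le_antisymm (le_inf' _ _ fun i _ => ?_) ?_
  · rw [hsupp]
    exact sum_le_sum_of_subset_of_nonneg (hi₀ i) fun x _ _ => hD x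
  · have h := inf'_le (fun i => ∑ x with x i ≤ a i, D x) (mem_univ i₀)
    rwa [hsupp] at h

lemma sum_filter_apply_le_eq_sum_marginal [∀ i, DecidableEq (α i)] (D : (∀ i, α i) → ℝ)
    (i : ι) (s : α i) :
    ∑ x with x i ≤ s, D x = ∑ σ with σ ≤ s, ∑ a : ∀ i, α i, if a i = σ then D a else 0 := by
  rw [← sum_fiberwise_of_maps_to (g := fun x => x i) (t := univ.filter (· ≤ s))
    (fun x hx => by simpa using hx)]
  refine sum_congr rfl fun σ hσ => ?_
  rw [← sum_filter, filter_filter]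
  refine sum_congr (filter_congr fun x _ => ?_) fun _ _ => rfl
  exact ⟨And.right, fun h => ⟨h ▸ (mem_filter.1 hσ).2, h⟩⟩

end ChainSupport

lemma eq_of_isChain_of_marginal_eq {ι : Type*} [Fintype ι] [DecidableEq ι] [Nonempty ι]
    {α : ι → Type*} [∀ i, Fintype (α i)] [∀ i, DecidableEq (α i)] [∀ i, PartialOrder (α i)]
    {D D' : (∀ i, α i) → ℝ}
    (hD : ∀ x, 0 ≤ D x) (hD' : ∀ x, 0 ≤ D' x)
    (hchain : IsChain (· ≤ ·) {x | D x ≠ 0}) (hchain' : IsChain (· ≤ ·) {x | D' x ≠ 0})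
    (hmarg : ∀ i σ, (∑ a : ∀ i, α i, if a i = σ then D a else 0) =
      ∑ a : ∀ i, α i, if a i = σ then D' a else 0) :
    D = D' := by
  refine eq_of_forall_sum_filter_le_eq fun a => ?_
  simp only [sum_filter_le_eq_inf'_of_isChain hD hchain,
    sum_filter_le_eq_inf'_of_isChain hD' hchain', sum_filter_apply_le_eq_sum_marginal, hmarg]

theorem exists_unique_chain_distribution_general (k : ℕ) (hk : 1 ≤ k) (q : Fin k → ℕ)
    (μ : (i : Fin k) → Fin (q i) → ℝ)
    (hμ0 : ∀ i σ, 0 ≤ μ i σ) (hμ1 : ∀ i, ∑ σ, μ i σ = 1) :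
    ∃! D : ((i : Fin k) → Fin (q i)) → ℝ,
      IsDist D ∧ IsChain (· ≤ ·) {a | D a ≠ 0} ∧
      ∀ (i : Fin k) (σ : Fin (q i)),
        (∑ a : (i : Fin k) → Fin (q i), if a i = σ then D a else 0) = μ i σ := by
  have : Nonempty (Fin k) := ⟨⟨0, hk⟩⟩
  refine ⟨canonicalDist μ, ⟨⟨fun _ => measureReal_nonneg, sum_canonicalDist hμ0 hμ1⟩,
    isChain_canonicalDist hμ0, canonicalDist_marginal hμ0 hμ1⟩, ?_⟩
  rintro D ⟨hD, hchain, hmarg⟩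
  exact eq_of_isChain_of_marginal_eq hD.1 (fun _ => measureReal_nonneg) hchain
    (isChain_canonicalDist hμ0) fun i σ =>
      (hmarg i σ).trans (canonicalDist_marginal hμ0 hμ1 i σ).symm

/-- Lemma 7.1 of the paper (canonical distribution): given a vector of marginals, there is
a unique distribution on `[q₁] × ⋯ × [q_k]` with these marginals whose support is a chain
in the coordinatewise partial order. -/
theorem exists_unique_chain_distribution (k : ℕ) (hk : 1 ≤ k) (q : Fin k → ℕ)
    (hq : ∀ i, 1 ≤ q i)
    (μ : (i : Fin k) → Fin (q i) → ℝ)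
    (hμ0 : ∀ i σ, 0 ≤ μ i σ) (hμ1 : ∀ i, ∑ σ, μ i σ = 1) :
    ∃! D : ((i : Fin k) → Fin (q i)) → ℝ,
      IsDist D ∧ IsChain (· ≤ ·) {a | D a ≠ 0} ∧
      ∀ (i : Fin k) (σ : Fin (q i)),
        (∑ a : (i : Fin k) → Fin (q i), if a i = σ then D a else 0) = μ i σ :=
  exists_unique_chain_distribution_general k hk q μ hμ0 hμ1
end

section
/- Let Q = [q_1]×···×[q_k], let c ∈ Q, let A : Q → ℝ_{≥0} be c-respecting, and let à be obtained from A by a finite sequence of polarization updates, i.e., à = (…((A_{u_1,v_1})_{u_2,v_2})…)_{u_t,v_t} where each pair (u_i,v_i) is incomparable. Then à is c-respecting. Moreover, if A is c-downward-respecting, then à is c-downward-respecting and Ã(w) = A(w) for every w ∈ Q with w > c. -/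
open scoped Classical

/-- The product set `Q = [q₁] × ⋯ × [q_k]` with the coordinatewise partial order. -/
abbrev QProd (k : ℕ) (q : Fin k → ℕ) := (i : Fin k) → Fin (q i)

/-- `u` and `v` are incomparable in the coordinatewise order. -/
def Incomp {k : ℕ} {q : Fin k → ℕ} (u v : QProd k q) : Prop := ¬ u ≤ v ∧ ¬ v ≤ u

/-- The `(u,v)`-polarization of `A`: shift the mass `ε = min{A(u),A(v)}` from `u,v` to
`u⊓v, u⊔v`. -/
noncomputable def polarize {k : ℕ} {q : Fin k → ℕ} (A : QProd k q → NNReal)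
    (u v : QProd k q) : QProd k q → NNReal :=
  fun b =>
    if b = u ∨ b = v then A b - min (A u) (A v)
    else if b = u ⊓ v ∨ b = u ⊔ v then A b + min (A u) (A v)
    else A b

/-- One polarization update at an incomparable pair. -/
def PolStep {k : ℕ} {q : Fin k → ℕ} (A B : QProd k q → NNReal) : Prop :=
  ∃ u v : QProd k q, Incomp u v ∧ B = polarize A u v

/-- `A` is `c`-respecting: every support point is comparable with `c`. -/
def CResp {k : ℕ} {q : Fin k → ℕ} (c : QProd k q) (A : QProd k q → NNReal) : Prop :=
  ∀ a, A a ≠ 0 → a ≤ c ∨ c ≤ a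

/-- `A` is `c`-downward-respecting: it is `c`-respecting, and the support points strictly
above `c` form a chain. -/
def CDownResp {k : ℕ} {q : Fin k → ℕ} (c : QProd k q) (A : QProd k q → NNReal) : Prop :=
  CResp c A ∧ ∀ a b, A a ≠ 0 → A b ≠ 0 → c < a → c < b → a ≤ b ∨ b ≤ a

lemma polStep_lemma {k : ℕ} {q : Fin k → ℕ} (c : QProd k q) (A B : QProd k q → NNReal)
    (h : PolStep A B) (hA : CResp c A) :
    CResp c B ∧ (CDownResp c A → CDownResp c B ∧ ∀ w, c < w → B w = A w) := by
  obtain ⟨u, v, huv, rfl⟩ := h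
  by_cases hε : min (A u) (A v) = 0
  · have hBA : polarize A u v = A := by
      funext b
      unfold polarize
      split_ifs <;> simp [hε]
    rw [hBA]
    exact ⟨hA, fun hD => ⟨hD, fun _ _ => rfl⟩⟩
  · have hu : A u ≠ 0 := fun h => hε (by simp [h])
    have hv : A v ≠ 0 := fun h => hε (by simp [h])
    rcases hA u hu with huc | hcu <;> rcases hA v hv with hvc | hcv
    · -- both ≤ c
      have key : ∀ w, c < w → polarize A u v w = A w := by
        intro w hw
        have hne : ∀ p : QProd k q, p ≤ c → w ≠ p := by
          intro p hp hwp
          exact absurd (hw.trans_le (hwp ▸ hp)) (lt_irrefl c)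
        unfold polarize
        rw [if_neg, if_neg]
        · rintro (h | h)
          · exact hne (u ⊓ v) (inf_le_left.trans huc) h
          · exact hne (u ⊔ v) (sup_le huc hvc) h
        · rintro (h | h)
          · exact hne u huc h
          · exact hne v hvc h
      have hCR : CResp c (polarize A u v) := by
        intro a ha
        unfold polarize at ha
        split_ifs at ha with h1 h2
        · rcases h1 with rfl | rfl
          · exact Or.inl huc
          · exact Or.inl hvc
        · rcases h2 with rfl | rfl
          · exact Or.inl (inf_le_left.trans huc)
          · exact Or.inl (sup_le huc hvc)
        · exact hA a ha
      refine ⟨hCR, fun hD => ⟨⟨hCR, ?_⟩, key⟩⟩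
      intro a b ha hb hca hcb
      rw [key a hca] at ha
      rw [key b hcb] at hb
      exact hD.2 a b ha hb hca hcb
    · exact absurd (huc.trans hcv) huv.1
    · exact absurd (hvc.trans hcu) huv.2
    · -- both ≥ c
      have hCR : CResp c (polarize A u v) := by
        intro a ha
        unfold polarize at ha
        split_ifs at ha with h1 h2
        · rcases h1 with rfl | rfl
          · exact Or.inr hcu
          · exact Or.inr hcv
        · rcases h2 with rfl | rfl
          · exact Or.inr (le_inf hcu hcv)
          · exact Or.inr (hcu.trans le_sup_left)
        · exact hA a ha
      have hnD : ¬ CDownResp c A := by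
        intro hD
        have hcu' : c < u := hcu.lt_of_ne (fun h => huv.1 (by rw [← h]; exact hcv))
        have hcv' : c < v := hcv.lt_of_ne (fun h => huv.2 (by rw [← h]; exact hcu))
        rcases hD.2 u v hu hv hcu' hcv' with h | h
        · exact huv.1 h
        · exact huv.2 h
      exact ⟨hCR, fun hD => absurd hD hnD⟩

/-- Claim 7.4 of the paper: polarization updates preserve being `c`-respecting; moreover
they preserve being `c`-downward-respecting and do not change values strictly above `c`. -/
theorem polarize_preserves_respecting (k : ℕ) (q : Fin k → ℕ) (c : QProd k q)
    (A B : QProd k q → NNReal)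
    (hreach : Relation.ReflTransGen PolStep A B)
    (hA : CResp c A) :
    CResp c B ∧
    (CDownResp c A → CDownResp c B ∧ ∀ w : QProd k q, c < w → B w = A w) := by
  induction hreach with
  | refl => exact ⟨hA, fun hD => ⟨hD, fun _ _ => rfl⟩⟩
  | tail hsteps hstep ih =>
    obtain ⟨hC, hDfun⟩ := ih
    obtain ⟨hC', hD'⟩ := polStep_lemma c _ _ hstep hC
    refine ⟨hC', fun hD => ?_⟩
    obtain ⟨hDB', hval⟩ := hDfun hD
    obtain ⟨hDB, hval'⟩ := hD' hDB'
    exact ⟨hDB, fun w hw => (hval' w hw).trans (hval w hw)⟩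
end

section
/- Let k ≥ 2, let n be a multiple of k, and let α ∈ (0, 1/(100k²)) be such that αn is a positive integer. Define M ∈ {0,1}^{kαn×n} by: for i ∈ [αn] and j ∈ [k], row k(i−1)+j has its unique 1 in column (j−1)·(n/k) + i, and all other entries are 0. Fix nonnegative integers ℓ_1,…,ℓ_k with ℓ := Σ_{j=1}^k ℓ_j satisfying 1 ≤ ℓ ≤ kαn. Let V be the set of vectors v ∈ {0,1}^n having, for each j ∈ [k], exactly ℓ_j ones among the coordinates {(j−1)n/k + 1, …, j·n/k}, and let U = {v ∈ V : there exists s ∈ {0,1}^{kαn} with s ≠ 0, Mᵀs = v, and such that for every i ∈ [αn] the block (s_{k(i−1)+1},…,s_{ki}) has Hamming weight different from 1}. Then |U| ≤ ((ℓ/n)·e³·α·k⁵)^{ℓ/2} · |V|. -/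
open scoped Classical

/-- The fixed partial permutation matrix `M ∈ {0,1}^{kαn×n}` (with `n = k·c`, `αn = a`):
row `k(i−1)+j` (1-based) has its unique 1 in column `(j−1)·(n/k) + i`. In 0-based terms,
row `r` has its 1 in column `(r mod k)·c + (r div k)`. -/
def Mrow (k c a : ℕ) (r : Fin (k * a)) (j : Fin (k * c)) : ℕ :=
  if j.val = (r.val % k) * c + r.val / k then 1 else 0

/-- The set `V` of `(ℓ₁,…,ℓ_k)`-vectors: for each `j ∈ [k]`, exactly `ℓ_j` ones among the
`j`-th block of `n/k = c` coordinates. -/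
noncomputable def Vset (k c : ℕ) (ℓv : Fin k → ℕ) : Finset (Fin (k * c) → Bool) :=
  Finset.univ.filter fun v => ∀ j : Fin k,
    (Finset.univ.filter fun x : Fin (k * c) => x.val / c = j.val ∧ v x = true).card = ℓv j

/-- The subset `U ⊆ V` of vectors of the form `Mᵀs` for some `s ≠ 0` all of whose
`k`-blocks have Hamming weight different from 1. -/
noncomputable def Uset (k c a : ℕ) (ℓv : Fin k → ℕ) : Finset (Fin (k * c) → Bool) :=
  (Vset k c ℓv).filter fun v => ∃ s : Fin (k * a) → Bool,
    (∃ r, s r = true) ∧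
    (∀ i : Fin a,
      (Finset.univ.filter fun r : Fin (k * a) => r.val / k = i.val ∧ s r = true).card ≠ 1) ∧
    (∀ j : Fin (k * c),
      (∑ r : Fin (k * a), Mrow k c a r j * (if s r then 1 else 0)) =
        (if v j then 1 else 0))

/-!
Since `α < 1/k`, row `k(i-1)+j` of `M` has its `1` at offset `i ≤ αn` of the `j`-th column block,
and distinct rows use distinct columns. So `v = Mᵀs` is determined by the sets `A_j ⊆ [αn]` of
offsets of its ones in block `j`; here `|A_j| = ℓ_j`, and the block-weight condition on `s` says
that no offset lies in exactly one `A_j`. Every point of the union `T` of the `A_j` is thus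
covered at least twice, so `2|T| ≤ ℓ`, and counting by `t = |T|` gives
`|U| ≤ ∑_{t ≤ ℓ/2} C(αn, t) ∏_j C(t, ℓ_j)`, while `|V| = ∏_j C(n/k, ℓ_j)`. The estimates
`C(t, ℓ_j) (n/k)^{ℓ_j} ≤ C(n/k, ℓ_j) t^{ℓ_j}`, `C(αn, t) t^t ≤ e^t (αn)^t` and
`(αn)^t t^{ℓ-t} ≤ (αnℓ)^{ℓ/2}` bound each of the at most `e^{ℓ/2}` terms by
`e^{ℓ/2} (αnℓ)^{ℓ/2} (k/n)^ℓ |V|`.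
-/

open Finset

section FamilyCounting

variable {α ι : Type*} [DecidableEq α] [Fintype ι]

theorem sum_card_filter_mem_biUnion (A : ι → Finset α) :
    ∑ x ∈ univ.biUnion A, #{j | x ∈ A j} = ∑ j, #(A j) := by
  simp_rw [card_eq_sum_ones, sum_filter]
  rw [sum_comm]
  refine sum_congr rfl fun j _ => ?_
  rw [← sum_filter, filter_mem_eq_inter, inter_eq_right.mpr (subset_biUnion_of_mem A (mem_univ j))]

theorem two_mul_card_biUnion_le {R : Finset α} {A : ι → Finset α} (hAR : ∀ j, A j ⊆ R)
    (hA : ∀ x ∈ R, #{j | x ∈ A j} ≠ 1) : 2 * #(univ.biUnion A) ≤ ∑ j, #(A j) := by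
  rw [← sum_card_filter_mem_biUnion, mul_comm, ← smul_eq_mul]
  refine card_nsmul_le_sum _ _ _ fun x hx => ?_
  obtain ⟨j, -, hxj⟩ := mem_biUnion.mp hx
  have hpos : 0 < #{j | x ∈ A j} := card_pos.mpr ⟨j, mem_filter.mpr ⟨mem_univ j, hxj⟩⟩
  have := hA x (hAR j hxj)
  omega

theorem card_filter_piFinset_powersetCard_le [DecidableEq ι] (R : Finset α) (ℓ : ι → ℕ) :
    #{A ∈ Fintype.piFinset (fun j => R.powersetCard (ℓ j)) | ∀ x ∈ R, #{j | x ∈ A j} ≠ 1} ≤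
      ∑ t ∈ range ((∑ j, ℓ j) / 2 + 1), (#R).choose t * ∏ j, t.choose (ℓ j) := by
  calc _ ≤ #((range ((∑ j, ℓ j) / 2 + 1)).biUnion fun t => (R.powersetCard t).biUnion
        fun T => Fintype.piFinset fun j => T.powersetCard (ℓ j)) := by
        refine card_le_card fun A hA => ?_
        simp only [mem_filter, Fintype.mem_piFinset, mem_powersetCard] at hA
        obtain ⟨hAℓ, hA1⟩ := hA
        have h2 := two_mul_card_biUnion_le (fun j => (hAℓ j).1) hA1
        simp only [(hAℓ _).2] at h2
        simp only [mem_biUnion, mem_range, mem_powersetCard, Fintype.mem_piFinset]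
        refine ⟨_, by omega, univ.biUnion A, ⟨biUnion_subset.mpr fun j _ => (hAℓ j).1, rfl⟩,
          fun j => ⟨subset_biUnion_of_mem A (mem_univ j), (hAℓ j).2⟩⟩
    _ ≤ ∑ t ∈ range ((∑ j, ℓ j) / 2 + 1), ∑ T ∈ R.powersetCard t,
          #(Fintype.piFinset fun j => T.powersetCard (ℓ j)) :=
        card_biUnion_le.trans (sum_le_sum fun t _ => card_biUnion_le)
    _ = _ := by
        refine sum_congr rfl fun t _ => ?_
        rw [sum_const_nat fun T hT => ?_, card_powersetCard]
        simp only [Fintype.card_piFinset, card_powersetCard, (mem_powersetCard.mp hT).2]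

end FamilyCounting

section Estimates

theorem Real.le_rpow_div_two_of_sq_le {x y : ℝ} (hx : 0 ≤ x) (hy : 0 ≤ y) {n : ℕ}
    (h : x ^ 2 ≤ y ^ n) : x ≤ y ^ ((n : ℝ) / 2) := by
  rwa [← pow_le_pow_iff_left₀ hx (by positivity) two_ne_zero, ← Real.rpow_mul_natCast hy,
    Nat.cast_two, div_mul_cancel₀ _ two_ne_zero, Real.rpow_natCast]

theorem Real.sq_rpow_div_two {y : ℝ} (hy : 0 ≤ y) (n : ℕ) : (y ^ 2) ^ ((n : ℝ) / 2) = y ^ n := by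
  rw [← Real.rpow_natCast y 2, ← Real.rpow_mul hy, Nat.cast_two, mul_div_cancel₀ _ two_ne_zero,
    Real.rpow_natCast]

theorem Nat.descFactorial_mul_pow_le_descFactorial_mul_pow {t c : ℕ} (h : t ≤ c) (l : ℕ) :
    t.descFactorial l * c ^ l ≤ c.descFactorial l * t ^ l := by
  induction l with
  | zero => simp
  | succ l ih =>
    have key : (t - l) * c ≤ (c - l) * t := by
      rw [Nat.sub_mul, Nat.sub_mul, Nat.mul_comm c t]
      exact Nat.sub_le_sub_left (Nat.mul_le_mul_left l h) _
    calc t.descFactorial (l + 1) * c ^ (l + 1)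
        = ((t - l) * c) * (t.descFactorial l * c ^ l) := by
          rw [Nat.descFactorial_succ, pow_succ]; ring
      _ ≤ ((c - l) * t) * (c.descFactorial l * t ^ l) := Nat.mul_le_mul key ih
      _ = c.descFactorial (l + 1) * t ^ (l + 1) := by
          rw [Nat.descFactorial_succ, pow_succ]; ring

theorem Nat.choose_mul_pow_le_choose_mul_pow {t c : ℕ} (h : t ≤ c) (l : ℕ) :
    t.choose l * c ^ l ≤ c.choose l * t ^ l := by
  have := Nat.descFactorial_mul_pow_le_descFactorial_mul_pow h l
  rw [Nat.descFactorial_eq_factorial_mul_choose, Nat.descFactorial_eq_factorial_mul_choose,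
    Nat.mul_assoc, Nat.mul_assoc] at this
  exact Nat.le_of_mul_le_mul_left this l.factorial_pos

theorem Nat.prod_choose_mul_pow_sum_le {ι : Type*} [Fintype ι] {t c : ℕ} (h : t ≤ c) (ℓ : ι → ℕ) :
    (∏ j, t.choose (ℓ j)) * c ^ (∑ j, ℓ j) ≤ (∏ j, c.choose (ℓ j)) * t ^ (∑ j, ℓ j) := by
  simp only [← prod_pow_eq_pow_sum, ← prod_mul_distrib]
  exact prod_le_prod' fun j _ => Nat.choose_mul_pow_le_choose_mul_pow h (ℓ j)

theorem Nat.pow_mul_pow_sub_sq_le {a t L : ℕ} (hta : t ≤ a) (htL : 2 * t ≤ L) :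
    (a ^ t * t ^ (L - t)) ^ 2 ≤ (a * L) ^ L := by
  obtain ⟨m, rfl⟩ := Nat.exists_eq_add_of_le htL
  have hsq : t * t ≤ a * (2 * t + m) := Nat.mul_le_mul hta (by omega)
  calc (a ^ t * t ^ (2 * t + m - t)) ^ 2 = (a * t) ^ (2 * t) * (t * t) ^ m := by
        rw [show 2 * t + m - t = t + m by omega]; ring
    _ ≤ (a * (2 * t + m)) ^ (2 * t) * (a * (2 * t + m)) ^ m := by
        gcongr
        omega
    _ = (a * (2 * t + m)) ^ (2 * t + m) := by rw [pow_add]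

theorem Nat.choose_mul_pow_self_le (n t : ℕ) : (n.choose t : ℝ) * t ^ t ≤ Real.exp t * n ^ t := by
  calc (n.choose t : ℝ) * t ^ t ≤ (n ^ t / t.factorial) * t ^ t :=
        mul_le_mul_of_nonneg_right (Nat.choose_le_pow_div t n) (by positivity)
    _ = (t ^ t / t.factorial) * n ^ t := by ring
    _ ≤ Real.exp t * n ^ t :=
        mul_le_mul_of_nonneg_right (Real.pow_div_factorial_le_exp _ t.cast_nonneg t) (by positivity)

theorem Nat.choose_mul_pow_le_exp {a t L : ℕ} (htL : 2 * t ≤ L) :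
    (a.choose t : ℝ) * t ^ L ≤ Real.exp t * (a * L) ^ ((L : ℝ) / 2) := by
  rcases lt_or_ge a t with hat | hta
  · rw [Nat.choose_eq_zero_of_lt hat, Nat.cast_zero, zero_mul]
    positivity
  have hpow : (a : ℝ) ^ t * t ^ (L - t) ≤ (a * L) ^ ((L : ℝ) / 2) :=
    Real.le_rpow_div_two_of_sq_le (by positivity) (by positivity)
      (by exact_mod_cast Nat.pow_mul_pow_sub_sq_le hta htL)
  calc (a.choose t : ℝ) * t ^ L = ((a.choose t : ℝ) * t ^ t) * t ^ (L - t) := by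
        rw [mul_assoc, ← pow_add, Nat.add_sub_cancel' (by omega)]
    _ ≤ (Real.exp t * a ^ t) * t ^ (L - t) :=
        mul_le_mul_of_nonneg_right (Nat.choose_mul_pow_self_le a t) (by positivity)
    _ = Real.exp t * (a ^ t * t ^ (L - t)) := by ring
    _ ≤ Real.exp t * (a * L) ^ ((L : ℝ) / 2) :=
        mul_le_mul_of_nonneg_left hpow (Real.exp_pos _).le

theorem Nat.sum_choose_mul_pow_le_exp (a L : ℕ) :
    ∑ t ∈ range (L / 2 + 1), (a.choose t : ℝ) * t ^ L ≤ Real.exp L * (a * L) ^ ((L : ℝ) / 2) := by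
  have hhalf : ((L / 2 : ℕ) : ℝ) ≤ (L : ℝ) / 2 := by
    rw [le_div_iff₀ two_pos]; exact_mod_cast Nat.div_mul_le_self L 2
  calc ∑ t ∈ range (L / 2 + 1), (a.choose t : ℝ) * t ^ L
      ≤ ∑ t ∈ range (L / 2 + 1), Real.exp ((L : ℝ) / 2) * (a * L) ^ ((L : ℝ) / 2) := by
        refine sum_le_sum fun t ht => (Nat.choose_mul_pow_le_exp ?_).trans ?_
        · have := mem_range.mp ht; omega
        · gcongr
          exact (Nat.cast_le.mpr (Nat.lt_succ_iff.mp (mem_range.mp ht))).trans hhalf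
    _ = ((L / 2 : ℕ) + 1 : ℝ) * Real.exp ((L : ℝ) / 2) * (a * L) ^ ((L : ℝ) / 2) := by
        rw [sum_const, card_range, nsmul_eq_mul, Nat.cast_add_one, mul_assoc]
    _ ≤ Real.exp ((L : ℝ) / 2) * Real.exp ((L : ℝ) / 2) * (a * L) ^ ((L : ℝ) / 2) := by
        gcongr
        linarith [Real.add_one_le_exp ((L : ℝ) / 2)]
    _ = Real.exp L * (a * L) ^ ((L : ℝ) / 2) := by
        rw [← Real.exp_add, add_halves]

theorem sum_choose_mul_prod_choose_le {ι : Type*} [Fintype ι] {a c : ℕ} (hac : a ≤ c) (hc : 0 < c)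
    (ℓ : ι → ℕ) :
    ∑ t ∈ range ((∑ j, ℓ j) / 2 + 1), ((a.choose t * ∏ j, t.choose (ℓ j) : ℕ) : ℝ) ≤
      (Real.exp 2 * (a * (∑ j, ℓ j : ℕ)) / c ^ 2) ^ (((∑ j, ℓ j : ℕ) : ℝ) / 2) *
        ∏ j, (c.choose (ℓ j) : ℝ) := by
  set L := ∑ j, ℓ j
  set P := ∏ j, (c.choose (ℓ j) : ℝ)
  have hcL : (0 : ℝ) < c ^ L := by positivity
  have hterm (t : ℕ) :
      ((a.choose t * ∏ j, t.choose (ℓ j) : ℕ) : ℝ) ≤ (a.choose t : ℝ) * t ^ L * P / c ^ L := by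
    rcases lt_or_ge c t with hct | htc
    · simp [Nat.choose_eq_zero_of_lt (hac.trans_lt hct)]
    have hprod : ((∏ j, t.choose (ℓ j) : ℕ) : ℝ) * c ^ L ≤ t ^ L * P := by
      rw [mul_comm _ P]
      simp only [P]
      exact_mod_cast Nat.prod_choose_mul_pow_sum_le htc ℓ
    rw [le_div_iff₀ hcL, Nat.cast_mul, mul_assoc, mul_assoc]
    exact mul_le_mul_of_nonneg_left hprod (by positivity)
  calc _ ≤ ∑ t ∈ range (L / 2 + 1), (a.choose t : ℝ) * t ^ L * P / c ^ L :=
        sum_le_sum fun t _ => hterm t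
    _ = (∑ t ∈ range (L / 2 + 1), (a.choose t : ℝ) * t ^ L) * P / c ^ L := by
        rw [← sum_div, ← sum_mul]
    _ ≤ Real.exp L * (a * L) ^ ((L : ℝ) / 2) * P / c ^ L := by
        gcongr
        exact Nat.sum_choose_mul_pow_le_exp a L
    _ = _ := by
        rw [Real.div_rpow (by positivity) (by positivity), Real.mul_rpow (Real.exp_pos 2).le
          (by positivity), ← Real.exp_mul, mul_div_cancel₀ _ two_ne_zero,
          Real.sq_rpow_div_two (Nat.cast_nonneg c)]
        ring

end Estimates

section Hypermatching

variable {k c a : ℕ}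

def rowBlock (r : Fin (k * a)) : Fin a := ⟨r / k, Nat.div_lt_of_lt_mul r.isLt⟩

def rowColor (r : Fin (k * a)) : Fin k := ⟨r % k, Nat.mod_lt _ (Nat.pos_of_mul_pos_right r.pos)⟩

theorem eq_of_rowBlock_eq_of_rowColor_eq {r r' : Fin (k * a)} (hb : rowBlock r = rowBlock r')
    (hc : rowColor r = rowColor r') : r = r' := by
  rw [rowBlock, rowBlock, Fin.mk.injEq] at hb
  rw [rowColor, rowColor, Fin.mk.injEq] at hc
  rw [Fin.ext_iff, ← Nat.div_add_mod r k, ← Nat.div_add_mod r' k, hb, hc]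

def colOfRow (hac : a ≤ c) (r : Fin (k * a)) : Fin (k * c) :=
  finProdFinEquiv (rowColor r, Fin.castLE hac (rowBlock r))

theorem colOfRow_eq_finProdFinEquiv_iff (hac : a ≤ c) (r : Fin (k * a)) (j : Fin k) (i : Fin c) :
    colOfRow hac r = finProdFinEquiv (j, i) ↔ rowColor r = j ∧ Fin.castLE hac (rowBlock r) = i := by
  rw [colOfRow, Equiv.apply_eq_iff_eq, Prod.mk.injEq]

theorem colOfRow_injective (hac : a ≤ c) : Function.Injective (colOfRow (k := k) hac) := by
  intro r r' h
  obtain ⟨hc, hb⟩ := (colOfRow_eq_finProdFinEquiv_iff hac r _ _).mp h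
  exact eq_of_rowBlock_eq_of_rowColor_eq (Fin.castLE_injective hac hb) hc

theorem Mrow_eq_ite (hac : a ≤ c) (r : Fin (k * a)) (x : Fin (k * c)) :
    Mrow k c a r x = if x = colOfRow hac r then 1 else 0 := by
  simp only [Mrow, colOfRow, Fin.ext_iff, finProdFinEquiv_apply_val, Fin.val_castLE, rowBlock,
    rowColor, Nat.add_comm (r / k), Nat.mul_comm c]

theorem apply_eq_true_iff_of_sum_Mrow (hac : a ≤ c) {s : Fin (k * a) → Bool}
    {v : Fin (k * c) → Bool}
    {x : Fin (k * c)} (hx : (∑ r, Mrow k c a r x * (if s r then 1 else 0)) = if v x then 1 else 0) :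
    v x = true ↔ ∃ r, s r = true ∧ colOfRow hac r = x := by
  simp only [Mrow_eq_ite hac, ite_mul, one_mul, zero_mul] at hx
  by_cases h : ∃ r, colOfRow hac r = x
  · obtain ⟨r₀, rfl⟩ := h
    simp only [(colOfRow_injective hac).eq_iff, sum_ite_eq, mem_univ, if_true] at hx
    simp only [(colOfRow_injective hac).eq_iff, exists_eq_right]
    revert hx
    cases s r₀ <;> cases v (colOfRow hac r₀) <;> simp
  · push Not at h
    rw [sum_eq_zero fun r _ => if_neg (Ne.symm (h r))] at hx
    refine iff_of_false ?_ fun ⟨r, _, hr⟩ => h r hr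
    simpa using hx.symm

/-- `finProdFinEquiv (j, i)` is the coordinate `j * c + i`, at offset `i` in the `j`-th block. -/
def blockSets (v : Fin (k * c) → Bool) (j : Fin k) : Finset (Fin c) :=
  {i | v (finProdFinEquiv (j, i)) = true}

def blockSetsEquiv : (Fin (k * c) → Bool) ≃ (Fin k → Finset (Fin c)) where
  toFun := blockSets
  invFun A x := decide ((finProdFinEquiv.symm x).2 ∈ A (finProdFinEquiv.symm x).1)
  left_inv v := by
    ext x
    simp only [blockSets, mem_filter, mem_univ, true_and, Prod.mk.eta, Equiv.apply_symm_apply,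
      Bool.decide_eq_true]
  right_inv A := by ext j i; simp [blockSets]

theorem val_div_eq_finProdFinEquiv_symm (x : Fin (k * c)) :
    x.val / c = (finProdFinEquiv.symm x).1.val := by
  rw [finProdFinEquiv_symm_apply, Fin.coe_divNat]

theorem card_blockSets (v : Fin (k * c) → Bool) (j : Fin k) :
    #(blockSets v j) = #{x : Fin (k * c) | x.val / c = j.val ∧ v x = true} := by
  simp_rw [val_div_eq_finProdFinEquiv_symm, ← Fin.ext_iff]
  have hmem (x : Fin (k * c)) : x ∈ ({x | (finProdFinEquiv.symm x).1 = j ∧ v x = true} :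
      Finset _) ↔ (finProdFinEquiv.symm x).1 = j ∧ v x = true := by
    rw [mem_filter, and_iff_right (mem_univ x)]
  have hsection {x : Fin (k * c)} (hx : (finProdFinEquiv.symm x).1 = j) :
      finProdFinEquiv (j, (finProdFinEquiv.symm x).2) = x := by
    rw [← hx, Prod.mk.eta, Equiv.apply_symm_apply]
  refine card_nbij' (fun i => finProdFinEquiv (j, i)) (fun x => (finProdFinEquiv.symm x).2)
    (fun i hi => ?_) (fun x hx => ?_) (fun i _ => by simp) fun x hx => hsection ((hmem x).mp hx).1
  · rw [mem_coe, hmem, Equiv.symm_apply_apply]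
    exact ⟨rfl, (mem_filter.mp hi).2⟩
  · rw [mem_coe, hmem] at hx
    rw [mem_coe, blockSets, mem_filter, hsection hx.1]
    exact ⟨mem_univ _, hx.2⟩

theorem card_Vset (ℓ : Fin k → ℕ) : #(Vset k c ℓ) = ∏ j, c.choose (ℓ j) := by
  rw [card_equiv blockSetsEquiv (t := Fintype.piFinset fun j => univ.powersetCard (ℓ j))]
  · simp
  · intro v
    simp [Vset, blockSetsEquiv, card_blockSets]

theorem mem_blockSets_iff_of_sum_Mrow (hac : a ≤ c) {s : Fin (k * a) → Bool}
    {v : Fin (k * c) → Bool}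
    (hsum : ∀ x, (∑ r, Mrow k c a r x * (if s r then 1 else 0)) = if v x then 1 else 0)
    (j : Fin k) (i : Fin c) :
    i ∈ blockSets v j ↔ ∃ r, s r = true ∧ rowColor r = j ∧ Fin.castLE hac (rowBlock r) = i := by
  rw [blockSets, mem_filter, and_iff_right (mem_univ _),
    apply_eq_true_iff_of_sum_Mrow hac (hsum _)]
  simp only [colOfRow_eq_finProdFinEquiv_iff]

theorem blockSets_mem_of_mem_Uset (hac : a ≤ c) {ℓ : Fin k → ℕ} {v : Fin (k * c) → Bool}
    (hv : v ∈ Uset k c a ℓ) :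
    blockSets v ∈ ({A ∈ Fintype.piFinset fun j =>
        (univ.map (Fin.castLEEmb hac)).powersetCard (ℓ j) |
      ∀ x ∈ univ.map (Fin.castLEEmb hac), #{j | x ∈ A j} ≠ 1} : Finset _) := by
  obtain ⟨hvV, s, -, hblock, hsum⟩ := mem_filter.mp hv
  have hmem := mem_blockSets_iff_of_sum_Mrow hac hsum
  simp only [mem_filter, Fintype.mem_piFinset, mem_powersetCard, mem_map, mem_univ, true_and,
    Fin.castLEEmb_apply, forall_exists_index, forall_apply_eq_imp_iff]
  refine ⟨fun j => ⟨fun i hi => ?_, ?_⟩, fun i => ?_⟩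
  · obtain ⟨r, -, -, rfl⟩ := (hmem j i).mp hi
    exact mem_map_of_mem _ (mem_univ _)
  · rw [card_blockSets]
    exact (mem_filter.mp hvV).2 j
  · have hcolors : ({j | Fin.castLE hac i ∈ blockSets v j} : Finset (Fin k)) =
        image rowColor {r | r.val / k = i.val ∧ s r = true} := by
      ext j
      simp only [mem_filter, mem_univ, true_and, hmem, mem_image, rowBlock,
        Fin.ext_iff]
      tauto
    rw [hcolors, card_image_of_injOn fun r hr r' hr' h => eq_of_rowBlock_eq_of_rowColor_eq ?_ h]
    · exact hblock i
    · rw [mem_coe, mem_filter] at hr hr'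
      exact Fin.ext (hr.2.1.trans hr'.2.1.symm)

theorem card_Uset_le (hac : a ≤ c) (ℓ : Fin k → ℕ) :
    #(Uset k c a ℓ) ≤ ∑ t ∈ range ((∑ j, ℓ j) / 2 + 1), a.choose t * ∏ j, t.choose (ℓ j) := by
  refine (card_le_card_of_injOn blockSets (fun v hv => blockSets_mem_of_mem_Uset hac hv)
    blockSetsEquiv.injective.injOn).trans ?_
  simpa using card_filter_piFinset_powersetCard_le (univ.map (Fin.castLEEmb hac)) ℓ

end Hypermatching

theorem hypermatching_counting_bound_general (k c a : ℕ) (hk : 2 ≤ k) (hc : 0 < c)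
    (α : ℝ) (hα1 : α < 1 / (100 * (k : ℝ) ^ 2))
    (hαn : (a : ℝ) = α * (k * c))
    (ℓv : Fin k → ℕ) :
    ((Uset k c a ℓv).card : ℝ) ≤
      ((((∑ j, ℓv j : ℕ) : ℝ) / ((k : ℝ) * c)) * Real.exp 1 ^ 3 * α * (k : ℝ) ^ 5) ^
          (((∑ j, ℓv j : ℕ) : ℝ) / 2) *
        ((Vset k c ℓv).card : ℝ) := by
  have hk1 : (1 : ℝ) ≤ k := by exact_mod_cast one_le_two.trans hk
  have hkc : (0 : ℝ) < k * c := by positivity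
  have hac : a ≤ c := by
    have ha : (a : ℝ) < 1 / (100 * k ^ 2) * (k * c) := hαn ▸ mul_lt_mul_of_pos_right hα1 hkc
    rw [div_mul_eq_mul_div, one_mul, lt_div_iff₀ (by positivity)] at ha
    exact_mod_cast (show (a : ℝ) ≤ c by nlinarith)
  set L := ∑ j, ℓv j
  have hbase : Real.exp 2 * (a * L) / c ^ 2 ≤ L / (k * c) * Real.exp 1 ^ 3 * α * k ^ 5 := by
    have hβ : L / (k * c) * Real.exp 1 ^ 3 * α * k ^ 5 =
        Real.exp 1 ^ 3 * k ^ 3 * (a * L / c ^ 2) := by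
      rw [show α = a / (k * c) by rw [hαn, mul_div_cancel_right₀ _ hkc.ne']]
      field_simp
    rw [hβ, mul_div_assoc, Real.exp_one_pow]
    gcongr
    calc Real.exp 2 ≤ Real.exp 3 := Real.exp_le_exp.mpr (by norm_num)
      _ ≤ Real.exp 3 * k ^ 3 := le_mul_of_one_le_right (Real.exp_pos 3).le (one_le_pow₀ hk1)
  calc ((Uset k c a ℓv).card : ℝ)
      ≤ ∑ t ∈ range (L / 2 + 1), ((a.choose t * ∏ j, t.choose (ℓv j) : ℕ) : ℝ) := by
        exact_mod_cast card_Uset_le hac ℓv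
    _ ≤ (Real.exp 2 * (a * L) / c ^ 2) ^ ((L : ℝ) / 2) * ∏ j, (c.choose (ℓv j) : ℝ) :=
        sum_choose_mul_prod_choose_le hac hc ℓv
    _ ≤ _ := by
        rw [card_Vset, Nat.cast_prod]
        gcongr

/-- Lemma 6.5 of the paper: the counting bound `|U| ≤ ((ℓ/n)·e³·α·k⁵)^{ℓ/2} · |V|`. -/
theorem hypermatching_counting_bound (k c a : ℕ) (hk : 2 ≤ k) (hc : 0 < c) (ha : 0 < a)
    (α : ℝ) (hα0 : 0 < α) (hα1 : α < 1 / (100 * (k : ℝ) ^ 2))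
    (hαn : (a : ℝ) = α * (k * c))
    (ℓv : Fin k → ℕ) (hL1 : 1 ≤ ∑ j, ℓv j) (hL2 : ∑ j, ℓv j ≤ k * a) :
    ((Uset k c a ℓv).card : ℝ) ≤
      ((((∑ j, ℓv j : ℕ) : ℝ) / ((k : ℝ) * c)) * Real.exp 1 ^ 3 * α * (k : ℝ) ^ 5) ^
          (((∑ j, ℓv j : ℕ) : ℝ) / 2) *
        ((Vset k c ℓv).card : ℝ) :=
  hypermatching_counting_bound_general k c a hk hc α hα1 hαn ℓv
end

section
/- Let q,k ≥ 1 and let F ⊆ {f : [q]^k → {0,1}} be a family that is not constant-satisfiable, i.e., for every σ ∈ [q] there exists f ∈ F that is not identically zero and satisfies f(σ,σ,…,σ) = 0. Then for every assignment ν ∈ [q]^{kq} there exist f ∈ F not identically zero and pairwise distinct indices j_1,…,j_k ∈ [kq] such that f(ν_{j_1},…,ν_{j_k}) = 0. In particular, the instance of Max-CSP on kq variables that applies every not-identically-zero f ∈ F to every k-tuple of distinct variables is unsatisfiable. -/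
/-- If `F` is not constant-satisfiable, then every assignment to `k·q` variables violates
some constraint of the instance that applies every not-identically-zero function of `F`
to every tuple of distinct variables; in particular that instance is unsatisfiable. -/
theorem not_constant_satisfiable_unsat (q k : ℕ) (hq : 1 ≤ q) (hk : 1 ≤ k)
    (F : Finset ((Fin k → Fin q) → Bool))
    (hns : ∀ σ : Fin q, ∃ f ∈ F, (∃ a, f a = true) ∧ f (fun _ => σ) = false) :
    ∀ ν : Fin (k * q) → Fin q, ∃ f ∈ F, (∃ a, f a = true) ∧
      ∃ j : Fin k → Fin (k * q), Function.Injective j ∧ f (fun t => ν (j t)) = false := by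
  intro ν
  have hcard : Fintype.card (Fin q) * k ≤ Fintype.card (Fin (k * q)) := by
    simp [Nat.mul_comm]
  have : Nonempty (Fin q) := ⟨⟨0, hq⟩⟩
  obtain ⟨σ, hσ⟩ := Fintype.exists_le_card_fiber_of_mul_le_card ν hcard
  obtain ⟨t, hts, htc⟩ := Finset.exists_subset_card_eq hσ
  obtain ⟨f, hfF, hfne, hfσ⟩ := hns σ
  refine ⟨f, hfF, hfne, fun i => (t.orderIsoOfFin htc i : Fin (k * q)), ?_, ?_⟩
  · intro a b hab
    exact (t.orderIsoOfFin htc).injective (Subtype.ext hab)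
  · have : (fun i => ν ((t.orderIsoOfFin htc i : Fin (k * q)))) = fun _ => σ := by
      funext i
      have hmem := hts ((t.orderIsoOfFin htc i).2)
      simpa using Finset.mem_filter.mp hmem |>.2
    rw [this]; exact hfσ
end

section
/- Let q,k ≥ 1 and let F ⊆ {f : [q]^k → {0,1}} be finite and nonempty. Suppose F weakly supports one-wise independence: there exists a nonempty F' ⊆ F with ρ(F') = ρ(F) such that every f ∈ F' supports one-wise independence, i.e., there is a probability distribution supported on f^{−1}(1) ⊆ [q]^k each of whose k coordinate marginals is uniform on [q]. Then there exist one-wise independent distributions D_Y ∈ S_1^Y(F) and D_N ∈ S_{ρ(F)}^N(F) with μ(D_Y) = μ(D_N). -/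
open scoped Classical

/-- `f` supports one-wise independence: some distribution supported on `f⁻¹(1)` has all
coordinate marginals uniform on `[q]`. -/
def supportsOneWise {q k : ℕ} (f : CFun q k) : Prop :=
  ∃ D : (Fin k → Fin q) → ℝ, IsDist D ∧ (∀ a, D a ≠ 0 → f a = true) ∧
    ∀ (i : Fin k) (σ : Fin q), (∑ a : Fin k → Fin q, if a i = σ then D a else 0) = (q : ℝ)⁻¹

/-!
Take an optimal strategy `DF` of the minimising player in the game defining `ρ(F')`; it exists
because the best-response value is lower semicontinuous on the compact simplex. Extended by zero
to `F`, it is the common weight of both distributions: `D_Y` mixes, for each `f`, a one-wise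
independent distribution on `f⁻¹(1)`, and `D_N` mixes the uniform distribution on `[q]^k`, so
both have marginals `DF(f) / q`. Under `D_N` the read-out values `b_{i,a_i}` are i.i.d. with law
`(1/q) ∑_σ P_σ`, so every assignment distribution earns exactly the payoff of `DF` against that
law, which is at most `ρ(F') = ρ(F)`.
-/
open Finset

section Products

variable {I J X Y : Type*} [Fintype I] [DecidableEq I] [Fintype X]

theorem sum_pi_prod_mul_apply (w : I → X → ℝ) (hw : ∀ i, ∑ x, w i x = 1) (i₀ : I)
    (g : X → ℝ) : ∑ β : I → X, (∏ i, w i (β i)) * g (β i₀) = ∑ x, w i₀ x * g x := by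
  have factor (β : I → X) :
      (∏ i, w i (β i)) * g (β i₀) = ∏ i, w i (β i) * if i = i₀ then g (β i) else 1 := by
    rw [prod_mul_distrib, prod_ite_eq' univ i₀, if_pos (mem_univ _)]
  simp_rw [factor]
  rw [← Fintype.prod_sum (fun i x => w i x * if i = i₀ then g x else 1),
    prod_eq_single i₀ (fun i _ hi => by simp only [if_neg hi, mul_one, hw]) (by simp)]
  simp

theorem sum_pi_prod_mul_map [DecidableEq X] [Fintype Y] (v : I → Y → ℝ) (φ : I → Y → X)
    (h : (I → X) → ℝ) :
    ∑ y : I → Y, (∏ i, v i (y i)) * h (fun i => φ i (y i)) =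
      ∑ c : I → X, (∏ i, ∑ y with φ i y = c i, v i y) * h c := by
  rw [← sum_fiberwise univ (fun y i => φ i (y i))]
  refine sum_congr rfl fun c _ => ?_
  have fiber : ({y : I → Y | (fun i => φ i (y i)) = c} : Finset (I → Y)) =
      Fintype.piFinset fun i => ({y | φ i y = c i} : Finset Y) := by
    ext y; simp [funext_iff]
  rw [prod_univ_sum, ← fiber, sum_mul]
  exact sum_congr rfl fun y hy => by rw [(mem_filter.mp hy).2]

theorem sum_pi_pi_prod_mul_readout [DecidableEq X] [Fintype J] [DecidableEq J]
    (w : J → X → ℝ) (hw : ∀ j, ∑ x, w j x = 1) (s : I → J) (h : (I → X) → ℝ) :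
    ∑ b : I → J → X, (∏ i, ∏ j, w j (b i j)) * h (fun i => b i (s i)) =
      ∑ c : I → X, (∏ i, w (s i) (c i)) * h c := by
  rw [sum_pi_prod_mul_map (Y := J → X) (fun _ β => ∏ j, w j (β j)) (fun i β => β (s i))]
  refine sum_congr rfl fun c _ => congrArg (· * h c) (prod_congr rfl fun i _ => ?_)
  simpa [sum_filter] using sum_pi_prod_mul_apply w hw (s i) (fun x => if x = c i then 1 else 0)

end Products

section Distributions

variable {I X : Type*} [Fintype I] [DecidableEq I] [Fintype X]

def iid (u : X → ℝ) : (I → X) → ℝ := fun a => ∏ i, u (a i)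

theorem IsDist.iid {u : X → ℝ} (hu : IsDist u) : IsDist (iid u : (I → X) → ℝ) :=
  ⟨fun _ => prod_nonneg fun _ _ => hu.1 _, by simp [_root_.iid, ← Fintype.prod_sum, hu.2]⟩

theorem isDist_uniform (q : ℕ) [NeZero q] : IsDist fun _ : Fin q => (q : ℝ)⁻¹ :=
  ⟨fun _ => by positivity, by simp⟩

theorem IsDist.bind {Y : Type*} [Fintype Y] {u : Y → ℝ} (hu : IsDist u) {P : Y → X → ℝ}
    (hP : ∀ y, IsDist (P y)) : IsDist fun x => ∑ y, u y * P y x :=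
  ⟨fun _ => sum_nonneg fun y _ => mul_nonneg (hu.1 y) ((hP y).1 _), by
    rw [sum_comm]; simp [← mul_sum, (hP _).2, hu.2]⟩

def coordMarginal [DecidableEq X] (D : (I → X) → ℝ) (i : I) (x : X) : ℝ :=
  ∑ a, if a i = x then D a else 0

theorem coordMarginal_iid [DecidableEq X] {u : X → ℝ} (hu : ∑ x, u x = 1) (i : I) (x : X) :
    coordMarginal (iid u) i x = u x := by
  simpa [coordMarginal, _root_.iid] using
    sum_pi_prod_mul_apply (fun _ => u) (fun _ => hu) i (fun y => if y = x then 1 else 0)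

end Distributions

section Game

variable {q k : ℕ}

def iidValue (f : CFun q k) (D : Fin q → ℝ) : ℝ :=
  ∑ a : Fin k → Fin q, iid D a * if f a then 1 else 0

theorem iidValue_le_one (f : CFun q k) {D : Fin q → ℝ} (hD : IsDist D) : iidValue f D ≤ 1 :=
  calc iidValue f D ≤ ∑ a : Fin k → Fin q, iid D a :=
        sum_le_sum fun a _ =>
          mul_le_of_le_one_right ((hD.iid (I := Fin k)).1 a) (by split_ifs <;> norm_num)
    _ = 1 := hD.iid.2

theorem sum_iid_mul_sum_prod_mul_cVal (f : CFun q k) (u : Fin q → ℝ) {P : Fin q → Fin q → ℝ}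
    (hP : ∀ σ, ∑ x, P σ x = 1) :
    ∑ a : Fin k → Fin q, iid u a *
        ∑ b : Fin k → Fin q → Fin q, (∏ i, ∏ σ, P σ (b i σ)) * cVal f a b =
      iidValue f fun x => ∑ σ, u σ * P σ x := by
  have readout (a : Fin k → Fin q) :
      ∑ b : Fin k → Fin q → Fin q, (∏ i, ∏ σ, P σ (b i σ)) * cVal f a b =
        ∑ c, (∏ i, P (a i) (c i)) * if f c then 1 else 0 :=
    sum_pi_pi_prod_mul_readout P hP a fun c => if f c then 1 else 0
  simp_rw [readout, mul_sum, iidValue, iid, Fintype.prod_sum, sum_mul, ← mul_assoc,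
    ← prod_mul_distrib]
  exact sum_comm

variable (F : Finset (CFun q k))

def payoff (DF : ↥F → ℝ) (D : Fin q → ℝ) : ℝ := ∑ f : ↥F, DF f * iidValue (f : CFun q k) D

noncomputable def maxPayoff (DF : ↥F → ℝ) : ℝ :=
  ⨆ D : {D : Fin q → ℝ // IsDist D}, payoff F DF D

theorem rho_eq_sInf_maxPayoff : rho F = sInf {r | ∃ DF, IsDist DF ∧ r = maxPayoff F DF} := by
  have payoff_eq (DF : ↥F → ℝ) (D : Fin q → ℝ) : payoff F DF D = ∑ f : ↥F,
      ∑ a : Fin k → Fin q, DF f * (∏ i, D (a i)) * if (f : CFun q k) a then 1 else 0 := by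
    simp only [payoff, iidValue, iid, mul_sum, mul_assoc]
  have maxPayoff_eq (DF : ↥F → ℝ) : maxPayoff F DF = sSup {s | ∃ D : Fin q → ℝ, IsDist D ∧
      s = ∑ f : ↥F, ∑ a : Fin k → Fin q,
        DF f * (∏ i, D (a i)) * if (f : CFun q k) a then 1 else 0} := by
    simp only [maxPayoff, iSup, ← payoff_eq]
    congr 1
    ext s
    simp [eq_comm]
  simp only [rho, maxPayoff_eq]

variable {F}

theorem payoff_le_one {DF : ↥F → ℝ} (hDF : IsDist DF) {D : Fin q → ℝ} (hD : IsDist D) :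
    payoff F DF D ≤ 1 :=
  calc payoff F DF D ≤ ∑ f : ↥F, DF f :=
        sum_le_sum fun f _ => mul_le_of_le_one_right (hDF.1 f) (iidValue_le_one _ hD)
    _ = 1 := hDF.2

theorem payoff_le_maxPayoff {DF : ↥F → ℝ} (hDF : IsDist DF) {D : Fin q → ℝ} (hD : IsDist D) :
    payoff F DF D ≤ maxPayoff F DF :=
  le_ciSup (f := fun D : {D : Fin q → ℝ // IsDist D} => payoff F DF D)
    ⟨1, by rintro _ ⟨D, rfl⟩; exact payoff_le_one hDF D.2⟩ ⟨D, hD⟩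

theorem lowerSemicontinuousOn_maxPayoff :
    LowerSemicontinuousOn (maxPayoff F) (stdSimplex ℝ ↥F) :=
  lowerSemicontinuousOn_ciSup
    (fun _ hDF => ⟨1, by rintro _ ⟨D, rfl⟩; exact payoff_le_one hDF D.2⟩)
    fun D => (continuous_finsetSum _ fun f _ =>
      (continuous_apply f).mul continuous_const).lowerSemicontinuous.lowerSemicontinuousOn _

theorem exists_isDist_maxPayoff_le_rho (hF : F.Nonempty) :
    ∃ DF, IsDist DF ∧ maxPayoff F DF ≤ rho F := by
  obtain ⟨f, hf⟩ := hF
  obtain ⟨DF, hDF, hmin⟩ := (lowerSemicontinuousOn_maxPayoff (F := F)).exists_isMinOn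
    ⟨_, ite_eq_mem_stdSimplex ℝ ⟨f, hf⟩⟩ (isCompact_stdSimplex ℝ _)
  refine ⟨DF, hDF, ?_⟩
  rw [rho_eq_sInf_maxPayoff]
  exact le_csInf ⟨_, DF, hDF, rfl⟩ fun _ ⟨DF', hDF', hr⟩ => hr ▸ hmin hDF'

end Game

section Mixture

variable {A B : Type*} [Fintype A] [Fintype B]

def mixture (w : A → ℝ) (D : A → B → ℝ) : A × B → ℝ := fun p => w p.1 * D p.1 p.2

theorem IsDist.mixture {w : A → ℝ} (hw : IsDist w) {D : A → B → ℝ} (hD : ∀ a, IsDist (D a)) :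
    IsDist (mixture w D) :=
  ⟨fun p => mul_nonneg (hw.1 _) ((hD _).1 _), by
    simp [_root_.mixture, Fintype.sum_prod_type, ← mul_sum, (hD _).2, hw.2]⟩

end Mixture

section ExtendByZero

variable {A : Type*} [DecidableEq A] {F F' : Finset A}

def extendByZero (DF : ↥F' → ℝ) (f : A) : ℝ :=
  if h : f ∈ F' then DF ⟨f, h⟩ else 0

theorem mem_of_extendByZero_ne_zero {DF : ↥F' → ℝ} {f : A} (h : extendByZero DF f ≠ 0) :
    f ∈ F' := by
  by_contra hf
  exact h (dif_neg hf)

theorem sum_extendByZero_mul (hsub : F' ⊆ F) (DF : ↥F' → ℝ) (g : A → ℝ) :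
    ∑ f : ↥F, extendByZero DF f * g f = ∑ f : ↥F', DF f * g f := by
  rw [sum_coe_sort F fun f => extendByZero DF f * g f, ← sum_subset hsub fun f _ hf => by
    simp [extendByZero, hf], ← sum_coe_sort]
  exact sum_congr rfl fun f _ => by simp [extendByZero]

theorem IsDist.extendByZero (hsub : F' ⊆ F) {DF : ↥F' → ℝ} (hDF : IsDist DF) :
    IsDist fun f : ↥F => _root_.extendByZero DF f :=
  ⟨fun _ => dite_nonneg (fun _ => hDF.1 _) fun _ => le_rfl,
    by simpa using (sum_extendByZero_mul hsub DF fun _ => 1).trans (by simpa using hDF.2)⟩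

end ExtendByZero

section HardPair

variable {q k : ℕ} {F : Finset (CFun q k)}

theorem marginal_mixture (w : ↥F → ℝ) (D : ↥F → (Fin k → Fin q) → ℝ)
    (x : ↥F × Fin k × Fin q) :
    marginal F (mixture w D) x = w x.1 * coordMarginal (D x.1) x.2.1 x.2.2 := by
  simp [marginal, mixture, coordMarginal, mul_sum, mul_ite]

theorem oneWise_mixture (w : ↥F → ℝ) {D : ↥F → (Fin k → Fin q) → ℝ} {c : ℝ}
    (hD : ∀ f i σ, coordMarginal (D f) i σ = c) : oneWise F (mixture w D) := by
  intro f i σ σ'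
  simp only [marginal_mixture, hD]

theorem mixture_mem_SY {w : ↥F → ℝ} (hw : IsDist w) {D : ↥F → (Fin k → Fin q) → ℝ}
    (hD : ∀ f, IsDist (D f)) (hsupp : ∀ f a, w f ≠ 0 → D f a ≠ 0 → (f : CFun q k) a = true) :
    mixture w D ∈ SY F 1 := by
  refine ⟨hw.mixture hD, ?_⟩
  have accepted (p : ↥F × (Fin k → Fin q)) :
      mixture w D p * cVal (p.1 : CFun q k) p.2 (planted q k) = mixture w D p := by
    by_cases h : mixture w D p = 0
    · simp [h]
    · obtain ⟨hw0, hD0⟩ := mul_ne_zero_iff.mp h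
      simp [cVal, planted, hsupp _ _ hw0 hD0]
  simp_rw [accepted]
  exact (hw.mixture hD).2.ge

theorem mixture_iid_uniform_mem_SN [NeZero q] {w : ↥F → ℝ} (hw : IsDist w) {β : ℝ}
    (hβ : ∀ D, IsDist D → payoff F w D ≤ β) :
    mixture w (fun _ => iid fun _ => (q : ℝ)⁻¹) ∈ SN F β := by
  refine ⟨hw.mixture fun _ => (isDist_uniform q).iid, fun P hP => ?_⟩
  calc _ = payoff F w fun x => ∑ σ, (q : ℝ)⁻¹ * P σ x := by
        simp only [Fintype.sum_prod_type, mixture, mul_assoc, ← mul_sum,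
          sum_iid_mul_sum_prod_mul_cVal _ _ fun σ => (hP σ).2, payoff]
    _ ≤ β := hβ _ ((isDist_uniform q).bind hP)

end HardPair

theorem weakly_supports_onewise_hard_pair_general (q k : ℕ) [NeZero q]
    (F : Finset (CFun q k))
    (F' : Finset (CFun q k)) (hsub : F' ⊆ F) (hF' : F'.Nonempty)
    (hrho : rho F' = rho F)
    (how : ∀ f ∈ F', supportsOneWise f) :
    ∃ DY DN : ↥F × (Fin k → Fin q) → ℝ,
      DY ∈ SY F 1 ∧ DN ∈ SN F (rho F) ∧ oneWise F DY ∧ oneWise F DN ∧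
      marginal F DY = marginal F DN := by
  obtain ⟨DF, hDF, hDFρ⟩ := exists_isDist_maxPayoff_le_rho hF'
  let w : ↥F → ℝ := fun f => extendByZero DF f
  have hw : IsDist w := hDF.extendByZero hsub
  have hpayoff (D : Fin q → ℝ) (hD : IsDist D) : payoff F w D ≤ rho F :=
    calc payoff F w D = payoff F' DF D :=
        sum_extendByZero_mul hsub DF fun f => iidValue f D
      _ ≤ rho F' := (payoff_le_maxPayoff hDF hD).trans hDFρ
      _ = rho F := hrho
  have hunif : IsDist fun _ : Fin q => (q : ℝ)⁻¹ := isDist_uniform q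
  have witness (f : ↥F) : ∃ D : (Fin k → Fin q) → ℝ, IsDist D ∧
      (∀ i σ, coordMarginal D i σ = (q : ℝ)⁻¹) ∧
      ((f : CFun q k) ∈ F' → ∀ a, D a ≠ 0 → (f : CFun q k) a = true) := by
    by_cases hf : (f : CFun q k) ∈ F'
    · obtain ⟨D, hD, hsupp, hmarg⟩ := how f hf
      exact ⟨D, hD, hmarg, fun _ => hsupp⟩
    · exact ⟨iid _, hunif.iid, coordMarginal_iid hunif.2, fun h => absurd h hf⟩
  choose DY hDY hDYmarg hDYsupp using witness
  have hDNmarg := coordMarginal_iid (I := Fin k) hunif.2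
  refine ⟨mixture w DY, mixture w fun _ => iid fun _ => (q : ℝ)⁻¹,
    mixture_mem_SY hw hDY fun f a hwf => hDYsupp f (mem_of_extendByZero_ne_zero hwf) a,
    mixture_iid_uniform_mem_SN hw hpayoff, oneWise_mixture w hDYmarg,
    oneWise_mixture w fun _ => hDNmarg, ?_⟩
  funext x
  simp only [marginal_mixture, hDYmarg, hDNmarg]

/-- Key step in Theorem 2.17 of the paper: if `F` weakly supports one-wise independence,
then there are one-wise independent distributions `D_Y ∈ S_1^Y(F)` and
`D_N ∈ S_{ρ(F)}^N(F)` with matching marginals. -/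
theorem weakly_supports_onewise_hard_pair (q k : ℕ) [NeZero q] [NeZero k]
    (F : Finset (CFun q k)) (hF : F.Nonempty)
    (F' : Finset (CFun q k)) (hsub : F' ⊆ F) (hF' : F'.Nonempty)
    (hrho : rho F' = rho F)
    (how : ∀ f ∈ F', supportsOneWise f) :
    ∃ DY DN : ↥F × (Fin k → Fin q) → ℝ,
      DY ∈ SY F 1 ∧ DN ∈ SN F (rho F) ∧ oneWise F DY ∧ oneWise F DN ∧
      marginal F DY = marginal F DN :=
  weakly_supports_onewise_hard_pair_general q k F F' hsub hF' hrho how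
end
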